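/- arXiv:2501.03733 — 10 statements merged into one kernel-verified Lean document; each statement's English description precedes it below -/
import Mathlib

section
/- Let (Ω, μ) be a measure space and let H = L²(μ; ℝ), the real Hilbert lattice of square-integrable functions with the a.e. pointwise order. Let A be a bounded linear operator on H that is positive (A f ≥ 0 whenever f ≥ 0), idempotent (A ∘ A = A), and whose self-commutator A*A − AA* is a positive operator. Then A is self-adjoint (A* = A), i.e. A is an orthogonal projection; in particular A*A − AA* = 0. -/
/-!
Write `P = A* A`, `Q = A A*` and `C = P - Q`. Since `A` and `A*` are idempotent,
`P - Q² = A* C A + A* A C + C Q`, a sum of positive operators (the cone of `L²` is self-dual,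
so `A*` is positive along with `A`). Hence `|Q² f| ≤ Q² |f| ≤ P |f|`, and since the norm of `L²`
is solid, `‖Q²‖ ≤ ‖P‖`. By the C*-identity this says `‖A‖⁴ ≤ ‖A‖²`, so `‖A‖ ≤ 1`, and a
contractive idempotent on a Hilbert space is an orthogonal projection: `0` is the point of
`ker A` closest to any `u ∈ range A`, because `‖u‖ = ‖A (u - w)‖ ≤ ‖u - w‖`.
-/

open MeasureTheory ContinuousLinearMap
open scoped InnerProductSpace

namespace ContinuousLinearMap

variable {E : Type*} [NormedAddCommGroup E] [NormedSpace ℝ E]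

/-- Positivity with respect to the order of `E`, not Mathlib's `IsPositive` (`0 ≤ ⟪T x, x⟫`). -/
def IsLatticePositive [LE E] (T : E →L[ℝ] E) : Prop :=
  ∀ x, 0 ≤ x → 0 ≤ T x

namespace IsLatticePositive

theorem mul [LE E] {S T : E →L[ℝ] E} (hS : S.IsLatticePositive) (hT : T.IsLatticePositive) :
    (S * T).IsLatticePositive :=
  fun x hx => hS _ (hT x hx)

theorem add [PartialOrder E] [IsOrderedAddMonoid E] {S T : E →L[ℝ] E}
    (hS : S.IsLatticePositive) (hT : T.IsLatticePositive) : (S + T).IsLatticePositive :=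
  fun x hx => add_nonneg (hS x hx) (hT x hx)

theorem monotone [PartialOrder E] [IsOrderedAddMonoid E] {T : E →L[ℝ] E}
    (hT : T.IsLatticePositive) : Monotone T := fun x y hxy => by
  simpa using hT (y - x) (sub_nonneg.mpr hxy)

theorem abs_apply_le [Lattice E] [IsOrderedAddMonoid E] {T : E →L[ℝ] E}
    (hT : T.IsLatticePositive) (x : E) : |T x| ≤ T |x| :=
  abs_le'.mpr ⟨hT.monotone (le_abs_self x), by simpa using hT.monotone (neg_le_abs x)⟩

end IsLatticePositive

theorem opNorm_le_of_abs_apply_le [Lattice E] [HasSolidNorm E] [IsOrderedAddMonoid E]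
    {S T : E →L[ℝ] E} (h : ∀ x, |S x| ≤ T |x|) : ‖S‖ ≤ ‖T‖ := by
  refine opNorm_le_bound _ (norm_nonneg T) fun x => ?_
  have hTx : 0 ≤ T |x| := (abs_nonneg _).trans (h x)
  calc ‖S x‖ ≤ ‖T |x|‖ := HasSolidNorm.solid (by rw [abs_of_nonneg hTx]; exact h x)
    _ ≤ ‖T‖ * ‖|x|‖ := le_opNorm T |x|
    _ = ‖T‖ * ‖x‖ := by rw [norm_abs_eq_norm]

end ContinuousLinearMap

theorem sub_mul_self_eq_of_isIdempotentElem {R : Type*} [Ring R] {a b : R}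
    (ha : IsIdempotentElem a) (hb : IsIdempotentElem b) :
    b * a - a * b * (a * b) =
      b * (b * a - a * b) * a + b * a * (b * a - a * b) + (b * a - a * b) * (a * b) := by
  have ha' : a * a = a := ha
  have hb' : b * b = b := hb
  simp only [mul_sub, sub_mul, mul_assoc, ha']
  simp only [← mul_assoc, ha', hb']
  abel

theorem CStarRing.norm_le_one_of_norm_mul_star_sq_le {R : Type*} [NonUnitalNormedRing R]
    [StarRing R] [CStarRing R] {a : R} (h : ‖a * star a * (a * star a)‖ ≤ ‖star a * a‖) :
    ‖a‖ ≤ 1 := by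
  rw [(IsSelfAdjoint.mul_star_self a).norm_mul_self, CStarRing.norm_self_mul_star,
    CStarRing.norm_star_mul_self] at h
  have : ‖a‖ * ‖a‖ ≤ 1 := by nlinarith [mul_self_nonneg ‖a‖]
  nlinarith [norm_nonneg a]

theorem ContinuousLinearMap.IsIdempotentElem.isSelfAdjoint_of_norm_le_one {𝕜 E : Type*}
    [RCLike 𝕜] [NormedAddCommGroup E] [InnerProductSpace 𝕜 E] [CompleteSpace E]
    {p : E →L[𝕜] E} (hp : IsIdempotentElem p) (h : ‖p‖ ≤ 1) : IsSelfAdjoint p := by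
  rw [isSelfAdjoint_iff_isSymmetric,
    LinearMap.IsIdempotentElem.isSymmetric_iff_isOrtho_range_ker hp.toLinearMap,
    Submodule.isOrtho_iff_inner_eq]
  rintro u hu v hv
  have hpu : p u = u := (LinearMap.IsIdempotentElem.mem_range_iff hp.toLinearMap).mp hu
  have hmin : ‖u - 0‖ = ⨅ w : LinearMap.ker (p : E →ₗ[𝕜] E), ‖u - w‖ := by
    refine le_antisymm (le_ciInf fun w => ?_) (ciInf_le ⟨0, ?_⟩ 0)
    · calc ‖u - 0‖ = ‖p (u - w)‖ := by simp [hpu]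
        _ ≤ ‖p‖ * ‖u - w‖ := p.le_opNorm _
        _ ≤ ‖u - w‖ := mul_le_of_le_one_left (norm_nonneg _) h
    · rintro _ ⟨w, rfl⟩
      exact norm_nonneg _
  simpa using ((Submodule.norm_eq_iInf_iff_inner_eq_zero _ (Submodule.zero_mem _)).mp hmin) v hv

namespace MeasureTheory.L2

variable {Ω : Type*} [MeasurableSpace Ω] {μ : Measure Ω}

theorem inner_nonneg_of_nonneg {f g : Lp ℝ 2 μ} (hf : 0 ≤ f) (hg : 0 ≤ g) :
    0 ≤ ⟪f, g⟫_ℝ := by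
  rw [inner_def]
  refine integral_nonneg_of_ae ?_
  filter_upwards [(Lp.coeFn_nonneg f).mpr hf, (Lp.coeFn_nonneg g).mpr hg] with x hfx hgx
  exact mul_nonneg hgx hfx

theorem nonneg_of_forall_inner_nonneg {f : Lp ℝ 2 μ}
    (hf : ∀ g : Lp ℝ 2 μ, 0 ≤ g → 0 ≤ ⟪f, g⟫_ℝ) : 0 ≤ f := by
  -- test against the negative part `g = f⁻`, for which `⟪f, g⟫ = -‖g‖²`
  set g : Lp ℝ 2 μ := -f ⊔ 0
  have hg : ⇑g =ᵐ[μ] fun x => max (-f x) 0 := by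
    filter_upwards [Lp.coeFn_sup (-f) 0, Lp.coeFn_neg f, Lp.coeFn_zero ℝ 2 μ] with x h₁ h₂ h₃
    rw [h₁, Pi.sup_apply, h₂, h₃, Pi.neg_apply, Pi.zero_apply]
  have hfg : ⟪f, g⟫_ℝ = -⟪g, g⟫_ℝ := by
    rw [inner_def, inner_def, ← integral_neg]
    refine integral_congr_ae ?_
    filter_upwards [hg] with x hx
    simp only [RCLike.inner_apply, conj_trivial, hx]
    rcases le_total (f x) 0 with h | h
    · rw [max_eq_left (by linarith)]; ring
    · rw [max_eq_right (by linarith)]; ring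
  have hg0 : g = 0 := by
    rw [← inner_self_eq_zero (𝕜 := ℝ)]
    linarith [hf g le_sup_right, real_inner_self_nonneg (x := g)]
  have hfg' : -f ≤ g := le_sup_left
  rwa [hg0, neg_nonpos] at hfg'

theorem isLatticePositive_adjoint {A : Lp ℝ 2 μ →L[ℝ] Lp ℝ 2 μ} (hA : A.IsLatticePositive) :
    (adjoint A).IsLatticePositive := fun f hf =>
  nonneg_of_forall_inner_nonneg fun g hg => by
    rw [adjoint_inner_left]
    exact inner_nonneg_of_nonneg hf (hA g hg)

end MeasureTheory.L2

/-- A positive idempotent operator on the Hilbert lattice `L²(μ; ℝ)` whose self-commutator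
`A*A - AA*` is a positive operator is an orthogonal projection (`A* = A`); in particular the
self-commutator vanishes. -/
theorem positive_idempotent_selfCommutator_positive_implies_selfAdjoint
    {Ω : Type*} [MeasurableSpace Ω] (μ : Measure Ω)
    (A : Lp ℝ 2 μ →L[ℝ] Lp ℝ 2 μ)
    (hA_pos : ∀ f : Lp ℝ 2 μ, 0 ≤ f → 0 ≤ A f)
    (hA_idem : A ∘L A = A)
    (hC_pos : ∀ f : Lp ℝ 2 μ, 0 ≤ f → 0 ≤ (adjoint A ∘L A - A ∘L adjoint A) f) :
    adjoint A = A ∧ adjoint A ∘L A - A ∘L adjoint A = 0 := by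
  have hA : A.IsLatticePositive := hA_pos
  have hA' : (adjoint A).IsLatticePositive := L2.isLatticePositive_adjoint hA
  have hidem : IsIdempotentElem A := hA_idem
  have hidem' : IsIdempotentElem (adjoint A) := hidem.star
  have hC : (adjoint A * A - A * adjoint A).IsLatticePositive := hC_pos
  have hQ : (A * adjoint A).IsLatticePositive := hA.mul hA'
  have hPQ : (adjoint A * A - A * adjoint A * (A * adjoint A)).IsLatticePositive := by
    rw [sub_mul_self_eq_of_isIdempotentElem hidem hidem']
    exact (((hA'.mul hC).mul hA).add ((hA'.mul hA).mul hC)).add (hC.mul hQ)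
  have hnorm : ‖A‖ ≤ 1 := by
    refine CStarRing.norm_le_one_of_norm_mul_star_sq_le (opNorm_le_of_abs_apply_le fun f => ?_)
    rw [star_eq_adjoint]
    calc |(A * adjoint A * (A * adjoint A)) f| ≤ (A * adjoint A * (A * adjoint A)) |f| :=
          (hQ.mul hQ).abs_apply_le f
      _ ≤ (adjoint A * A) |f| := by simpa using hPQ |f| (abs_nonneg f)
  have hsa : adjoint A = A := (hidem.isSelfAdjoint_of_norm_le_one hnorm).star_eq
  exact ⟨hsa, by rw [hsa, sub_self]⟩
end

section
/- Let (Ω, μ) be a measure space, H = L²(μ; ℝ), and let A be a positive bounded linear operator on H such that A*A − AA* is a positive operator. Then (1) for every positive integer n the operator (A*)ⁿAⁿ − (A*A)ⁿ is positive, and (2) the spectral radius satisfies r(A*A) ≤ r(A)². -/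
open MeasureTheory ContinuousLinearMap
open scoped ENNReal

/-!
Part (1) is pure algebra: writing `D n = (A*A)ⁿ - (AA*)ⁿ` and `E n = (A*)ⁿAⁿ - (A*A)ⁿ`, one has
`D (n+1) = A*A · D n + (A*A - AA*) · (AA*)ⁿ` and `E (n+1) = A* (E n + D n) A`, so both stay in the
semiring of positive operators, which contains `A`, `A*` (the positive cone of `L²` is self-dual)
and `A*A - AA*`.

For (2), `r(A*A) ≤ ‖A*A‖ = ‖A‖²`, so it suffices that `‖A‖ ∈ σ(A)`. Part (1), monotonicity of the
norm on positive operators and the C*-identity give `‖A‖ⁿ ≤ ‖Aⁿ‖`. If `r = ‖A‖` were in the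
resolvent set, `R = (r - A)⁻¹` would be positive (a limit of the positive Neumann series
`(k - A)⁻¹ = ∑ Aⁿ / kⁿ⁺¹`, `k ↓ r`), and `rⁿ⁺² R² - (n+1) Aⁿ ≥ 0` would give
`(n+1) rⁿ ≤ rⁿ⁺² ‖R²‖` for all `n`, which is absurd.
-/

theorem Subsemiring.pow_mul_pow_sub_mul_pow_mem {R : Type*} [Ring R] (S : Subsemiring R)
    {a b : R} (ha : a ∈ S) (hb : b ∈ S) (hba : b * a - a * b ∈ S) (n : ℕ) :
    b ^ n * a ^ n - (b * a) ^ n ∈ S := by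
  have hdiff (n : ℕ) : (b * a) ^ n - (a * b) ^ n ∈ S := by
    induction n with
    | zero => simp [S.zero_mem]
    | succ n ih =>
      have key : (b * a) ^ (n + 1) - (a * b) ^ (n + 1)
          = b * a * ((b * a) ^ n - (a * b) ^ n) + (b * a - a * b) * (a * b) ^ n := by
        rw [pow_succ', pow_succ' (a * b)]
        noncomm_ring
      rw [key]
      exact S.add_mem (S.mul_mem (S.mul_mem hb ha) ih)
        (S.mul_mem hba (S.pow_mem (S.mul_mem ha hb) n))
  induction n with
  | zero => simp [S.zero_mem]
  | succ n ih =>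
    have key : b ^ (n + 1) * a ^ (n + 1) - (b * a) ^ (n + 1)
        = b * ((b ^ n * a ^ n - (b * a) ^ n) + ((b * a) ^ n - (a * b) ^ n)) * a := by
      have hshift : (b * a) ^ (n + 1) = b * (a * b) ^ n * a := by
        rw [pow_succ, ← mul_assoc, SemiconjBy.pow_right (mul_assoc b a b).symm n]
      rw [hshift, pow_succ' b, pow_succ a]
      noncomm_ring
    rw [key]
    exact S.mul_mem (S.mul_mem hb (S.add_mem ih (hdiff n))) ha

section OrderedSpace

variable (E : Type*) [NormedAddCommGroup E] [PartialOrder E] [IsOrderedAddMonoid E]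
  [NormedSpace ℝ E]

def positiveOperators : Subsemiring (E →L[ℝ] E) where
  carrier := {T | ∀ f, 0 ≤ f → 0 ≤ T f}
  zero_mem' _ _ := le_rfl
  one_mem' _ hf := hf
  add_mem' hS hT f hf := add_nonneg (hS f hf) (hT f hf)
  mul_mem' hS hT f hf := hS _ (hT f hf)

variable {E}

theorem apply_mono_of_mem_positiveOperators {T : E →L[ℝ] E} (hT : T ∈ positiveOperators E)
    {f g : E} (hfg : f ≤ g) : T f ≤ T g := by
  simpa using hT (g - f) (sub_nonneg.mpr hfg)

theorem isClosed_positiveOperators [OrderClosedTopology E] :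
    IsClosed (positiveOperators E : Set (E →L[ℝ] E)) := by
  simp only [positiveOperators, Subsemiring.coe_set_mk, Set.ofPred_forall]
  exact isClosed_iInter fun f => isClosed_iInter fun _ =>
    isClosed_le continuous_const ((ContinuousLinearMap.apply ℝ E f).continuous)

variable [PosSMulMono ℝ E]

theorem smul_mem_positiveOperators {T : E →L[ℝ] E} (hT : T ∈ positiveOperators E) {c : ℝ}
    (hc : 0 ≤ c) : c • T ∈ positiveOperators E :=
  fun f hf => smul_nonneg hc (hT f hf)

variable {A R : E →L[ℝ] E} {k : ℝ}

theorem smul_sub_pow_mem_positiveOperators (hA : A ∈ positiveOperators E)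
    (hR : R ∈ positiveOperators E) (hk : 0 ≤ k) (hAR : A * R = k • R - 1) (n : ℕ) :
    k ^ (n + 1) • R - A ^ n ∈ positiveOperators E := by
  induction n with
  | zero => simpa [← hAR] using mul_mem hA hR
  | succ n ih =>
    have key : k ^ (n + 2) • R - A ^ (n + 1) = k ^ (n + 1) • 1 + A * (k ^ (n + 1) • R - A ^ n) := by
      rw [mul_sub, mul_smul_comm, hAR, pow_succ' A]
      module
    rw [key]
    exact add_mem (smul_mem_positiveOperators (one_mem _) (pow_nonneg hk _)) (mul_mem hA ih)

theorem smul_sq_sub_smul_pow_mem_positiveOperators (hA : A ∈ positiveOperators E)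
    (hR : R ∈ positiveOperators E) (hk : 0 ≤ k) (hAR : A * R = k • R - 1) (n : ℕ) :
    k ^ (n + 2) • R ^ 2 - ((n : ℝ) + 1) • A ^ n ∈ positiveOperators E := by
  induction n with
  | zero =>
    have key : k ^ 2 • R ^ 2 - ((0 : ℕ) + 1 : ℝ) • A ^ 0 = A * R + k • (A * R * R) := by
      rw [hAR, sub_mul, smul_mul_assoc, one_mul, sq, sq, pow_zero]
      module
    rw [key]
    exact add_mem (mul_mem hA hR) (smul_mem_positiveOperators (mul_mem (mul_mem hA hR) hR) hk)
  | succ n ih =>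
    have key : k ^ (n + 3) • R ^ 2 - ((↑(n + 1) : ℝ) + 1) • A ^ (n + 1)
        = A * (k ^ (n + 2) • R ^ 2 - ((n : ℝ) + 1) • A ^ n) + (k ^ (n + 2) • R - A ^ (n + 1)) := by
      rw [mul_sub, mul_smul_comm, mul_smul_comm, sq, ← mul_assoc, hAR, sub_mul, smul_mul_assoc,
        one_mul, pow_succ' A]
      push_cast
      module
    rw [key]
    exact add_mem (mul_mem hA ih) (smul_sub_pow_mem_positiveOperators hA hR hk hAR (n + 1))

end OrderedSpace

section NormedLattice

variable {E : Type*} [NormedAddCommGroup E] [Lattice E] [IsOrderedAddMonoid E] [NormedSpace ℝ E]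

theorem abs_apply_le_apply_abs {T : E →L[ℝ] E} (hT : T ∈ positiveOperators E) (f : E) :
    |T f| ≤ T |f| := by
  refine abs_le'.mpr ⟨apply_mono_of_mem_positiveOperators hT (le_abs_self f), ?_⟩
  simpa using apply_mono_of_mem_positiveOperators hT (neg_le_abs f)

theorem norm_le_norm_of_sub_mem_positiveOperators [HasSolidNorm E] {S T : E →L[ℝ] E}
    (hS : S ∈ positiveOperators E) (hTS : T - S ∈ positiveOperators E) : ‖S‖ ≤ ‖T‖ := by
  refine S.opNorm_le_bound (norm_nonneg T) fun f => ?_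
  have hSf : |S f| ≤ |T (|f|)| := calc
    |S f| ≤ S |f| := abs_apply_le_apply_abs hS f
    _ ≤ T |f| := by simpa using hTS |f| (abs_nonneg f)
    _ ≤ |T (|f|)| := le_abs_self _
  calc ‖S f‖ ≤ ‖T (|f|)‖ := norm_le_norm_of_abs_le_abs hSf
    _ ≤ ‖T‖ * ‖|f|‖ := T.le_opNorm _
    _ = ‖T‖ * ‖f‖ := by rw [norm_abs_eq_norm]

end NormedLattice

section BanachLattice

variable {E : Type*} [NormedAddCommGroup E] [Lattice E] [HasSolidNorm E] [IsOrderedAddMonoid E]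
  [NormedSpace ℝ E] [PosSMulMono ℝ E] [CompleteSpace E] {A : E →L[ℝ] E}

theorem resolvent_mem_positiveOperators_of_norm_lt (hA : A ∈ positiveOperators E) {k : ℝ}
    (hk : ‖A‖ < k) : resolvent A k ∈ positiveOperators E := by
  have hk₀ : 0 < k := (norm_nonneg A).trans_lt hk
  have hsmall : ‖k⁻¹ • A‖ < 1 := by
    rw [norm_smul, norm_inv, Real.norm_of_nonneg hk₀.le, inv_mul_lt_one₀ hk₀]
    exact hk
  have hseries : k • resolvent A k = ∑' n, (k⁻¹ • A) ^ n := by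
    have := spectrum.units_smul_resolvent_self (r := Units.mk0 k hk₀.ne') (a := A)
    simp only [Units.smul_def, Units.val_inv_eq_inv_val, Units.val_mk0] at this
    rw [this, resolvent, map_one, geom_series_eq_inverse _ hsmall]
  rw [← inv_smul_smul₀ hk₀.ne' (resolvent A k), hseries]
  exact smul_mem_positiveOperators (tsum_mem isClosed_positiveOperators fun n =>
    pow_mem (smul_mem_positiveOperators hA (inv_nonneg.mpr hk₀.le)) n) (inv_nonneg.mpr hk₀.le)

theorem resolvent_mem_positiveOperators (hA : A ∈ positiveOperators E) {k : ℝ}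
    (hk : ‖A‖ ≤ k) (hkA : k ∈ resolventSet ℝ A) : resolvent A k ∈ positiveOperators E := by
  have hinv : ContinuousAt Ring.inverse (algebraMap ℝ (E →L[ℝ] E) k - A) :=
    hkA.unit_spec ▸ NormedRing.inverse_continuousAt hkA.unit
  have hcont : ContinuousAt (resolvent A) k :=
    hinv.comp (f := fun l => algebraMap ℝ (E →L[ℝ] E) l - A)
      ((continuous_algebraMap ℝ _).sub continuous_const).continuousAt
  refine isClosed_positiveOperators.mem_of_tendsto
    (hcont.tendsto.mono_left (nhdsWithin_le_nhds (s := Set.Ioi k)))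
    (eventually_nhdsWithin_of_forall fun l hl => ?_)
  exact resolvent_mem_positiveOperators_of_norm_lt hA (hk.trans_lt hl)

theorem norm_mem_spectrum_of_pow_norm_le (hA : A ∈ positiveOperators E) (hA₀ : A ≠ 0)
    (hpow : ∀ n ≠ 0, ‖A‖ ^ n ≤ ‖A ^ n‖) : ‖A‖ ∈ spectrum ℝ A := by
  by_contra hnot
  have hkA : ‖A‖ ∈ resolventSet ℝ A := spectrum.notMem_iff.mp hnot
  have hr : 0 < ‖A‖ := norm_pos_iff.mpr hA₀
  set R := resolvent A ‖A‖
  have hR : R ∈ positiveOperators E := resolvent_mem_positiveOperators hA le_rfl hkA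
  have hAR : A * R = ‖A‖ • R - 1 := by
    have h := hkA.mul_val_inv
    rw [← spectrum.resolvent_eq hkA, sub_mul, Algebra.algebraMap_eq_smul_one, smul_one_mul] at h
    rw [← h]
    abel
  have hbound (n : ℕ) (hn : n ≠ 0) : (n : ℝ) + 1 ≤ ‖A‖ ^ 2 * ‖R ^ 2‖ := by
    have h := norm_le_norm_of_sub_mem_positiveOperators
      (smul_mem_positiveOperators (pow_mem hA n) (by positivity : (0 : ℝ) ≤ (n : ℝ) + 1))
      (smul_sq_sub_smul_pow_mem_positiveOperators hA hR hr.le hAR n)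
    rw [norm_smul, norm_smul, Real.norm_of_nonneg (by positivity),
      Real.norm_of_nonneg (by positivity)] at h
    refine le_of_mul_le_mul_left ?_ (pow_pos hr n)
    calc ‖A‖ ^ n * ((n : ℝ) + 1) ≤ ((n : ℝ) + 1) * ‖A ^ n‖ := by
          rw [mul_comm]; gcongr; exact hpow n hn
      _ ≤ ‖A‖ ^ (n + 2) * ‖R ^ 2‖ := h
      _ = ‖A‖ ^ n * (‖A‖ ^ 2 * ‖R ^ 2‖) := by ring
  obtain ⟨n, hn⟩ := exists_nat_gt (‖A‖ ^ 2 * ‖R ^ 2‖)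
  have := hbound (n + 1) n.succ_ne_zero
  push_cast at this
  linarith

theorem nnnorm_le_spectralRadius_of_pow_norm_le (hA : A ∈ positiveOperators E)
    (hpow : ∀ n ≠ 0, ‖A‖ ^ n ≤ ‖A ^ n‖) : (‖A‖₊ : ℝ≥0∞) ≤ spectralRadius ℝ A := by
  obtain rfl | hA₀ := eq_or_ne A 0
  · simp
  · have h := le_iSup₂ (f := fun k (_ : k ∈ spectrum ℝ A) => (‖k‖₊ : ℝ≥0∞)) _
      (norm_mem_spectrum_of_pow_norm_le hA hA₀ hpow)
    rwa [nnnorm_norm] at h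

end BanachLattice

namespace MeasureTheory.Lp

variable {Ω : Type*} [MeasurableSpace Ω] {μ : Measure Ω}

instance {E : Type*} [NormedAddCommGroup E] [PartialOrder E] [NormedSpace ℝ E] [PosSMulMono ℝ E]
    {p : ℝ≥0∞} : PosSMulMono ℝ (Lp E p μ) where
  smul_le_smul_of_nonneg_left c hc f g hfg := by
    rw [← coeFn_le] at hfg ⊢
    filter_upwards [hfg, coeFn_smul c f, coeFn_smul c g] with x hx hcf hcg
    rw [hcf, hcg]
    exact smul_le_smul_of_nonneg_left hx hc

theorem inner_nonneg_of_nonneg {f g : Lp ℝ 2 μ} (hf : 0 ≤ f) (hg : 0 ≤ g) :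
    0 ≤ inner ℝ f g := by
  rw [L2.inner_def]
  rw [← coeFn_nonneg] at hf hg
  refine integral_nonneg_of_ae ?_
  filter_upwards [hf, hg] with x hfx hgx
  simpa [Real.inner_apply] using mul_nonneg hgx hfx

theorem nonneg_of_forall_inner_nonneg {f : Lp ℝ 2 μ} (hf : ∀ g, 0 ≤ g → 0 ≤ inner ℝ f g) :
    0 ≤ f := by
  have hpair : inner ℝ f f⁻ = -inner ℝ f⁻ f⁻ := by
    rw [L2.inner_def, L2.inner_def, ← integral_neg]
    refine integral_congr_ae ?_
    filter_upwards [coeFn_sup (-f) 0, coeFn_neg f, coeFn_zero ℝ 2 μ] with x hsup hneg hzero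
    have hfx : (f⁻ : Lp ℝ 2 μ) x = max (-f x) 0 := by
      rw [negPart_def, hsup, Pi.sup_apply, hneg, hzero]
      rfl
    rcases le_total (f x) 0 with h | h <;> simp [hfx, h, sq]
  have hnorm : ‖f⁻‖ ^ 2 ≤ 0 := by
    simpa [hpair, real_inner_self_eq_norm_sq] using hf f⁻ (negPart_nonneg f)
  rw [← negPart_eq_zero, ← norm_eq_zero]
  nlinarith [norm_nonneg f⁻]

end MeasureTheory.Lp

theorem IsSelfAdjoint.pow_norm_le_norm_pow {R : Type*} [NormedRing R] [StarRing R] [CStarRing R]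
    {x : R} (hx : IsSelfAdjoint x) {n : ℕ} (hn : n ≠ 0) : ‖x‖ ^ n ≤ ‖x ^ n‖ := by
  rcases (norm_nonneg x).eq_or_lt with h₀ | hpos
  · rw [← h₀, zero_pow hn]
    exact norm_nonneg _
  have hlt : n < 2 ^ n := Nat.lt_two_pow_self
  have hsplit : n + (2 ^ n - n) = 2 ^ n := Nat.add_sub_cancel' hlt.le
  refine le_of_mul_le_mul_right ?_ (pow_pos hpos (2 ^ n - n))
  calc ‖x‖ ^ n * ‖x‖ ^ (2 ^ n - n) = ‖x ^ n * x ^ (2 ^ n - n)‖ := by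
        rw [← pow_add, ← pow_add, hsplit, hx.norm_pow_two_pow]
    _ ≤ ‖x ^ n‖ * ‖x ^ (2 ^ n - n)‖ := norm_mul_le _ _
    _ ≤ ‖x ^ n‖ * ‖x‖ ^ (2 ^ n - n) := by
        gcongr
        exact norm_pow_le' x (Nat.sub_pos_of_lt hlt)

theorem pow_norm_le_norm_pow_of_adjoint_pow_mul_pow_sub_mem {E : Type*} [NormedAddCommGroup E]
    [InnerProductSpace ℝ E] [CompleteSpace E] [Lattice E] [HasSolidNorm E] [IsOrderedAddMonoid E]
    {A : E →L[ℝ] E} (hA : A ∈ positiveOperators E) (hA' : adjoint A ∈ positiveOperators E)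
    (h : ∀ n : ℕ, adjoint A ^ n * A ^ n - (adjoint A * A) ^ n ∈ positiveOperators E)
    {n : ℕ} (hn : n ≠ 0) : ‖A‖ ^ n ≤ ‖A ^ n‖ := by
  have hsq : (‖A‖ ^ n) ^ 2 ≤ ‖A ^ n‖ ^ 2 := calc
    (‖A‖ ^ n) ^ 2 = ‖adjoint A * A‖ ^ n := by
        rw [mul_def, norm_adjoint_comp_self, ← sq, ← pow_mul, ← pow_mul, mul_comm]
    _ ≤ ‖(adjoint A * A) ^ n‖ := by
        rw [← star_eq_adjoint]
        exact (IsSelfAdjoint.star_mul_self A).pow_norm_le_norm_pow hn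
    _ ≤ ‖adjoint A ^ n * A ^ n‖ :=
        norm_le_norm_of_sub_mem_positiveOperators (pow_mem (mul_mem hA' hA) n) (h n)
    _ = ‖A ^ n‖ ^ 2 := by
        rw [← star_eq_adjoint, ← star_pow, CStarRing.norm_star_mul_self, sq]
  exact (pow_le_pow_iff_left₀ (by positivity) (norm_nonneg _) two_ne_zero).mp hsq

theorem adjoint_mem_positiveOperators {Ω : Type*} [MeasurableSpace Ω] {μ : Measure Ω}
    {A : Lp ℝ 2 μ →L[ℝ] Lp ℝ 2 μ} (hA : A ∈ positiveOperators (Lp ℝ 2 μ)) :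
    adjoint A ∈ positiveOperators (Lp ℝ 2 μ) := fun f hf =>
  Lp.nonneg_of_forall_inner_nonneg fun g hg => by
    rw [adjoint_inner_left]
    exact Lp.inner_nonneg_of_nonneg hf (hA g hg)

/-- If `A` is a positive operator on the Hilbert lattice `L²(μ; ℝ)` with positive self-commutator
`A*A - AA*`, then `(A*)ⁿAⁿ - (A*A)ⁿ` is a positive operator for every positive integer `n`, and
the spectral radius satisfies `r(A*A) ≤ r(A)²`. -/
theorem positive_selfCommutator_powers_and_spectralRadius
    {Ω : Type*} [MeasurableSpace Ω] (μ : Measure Ω)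
    (A : Lp ℝ 2 μ →L[ℝ] Lp ℝ 2 μ)
    (hA_pos : ∀ f : Lp ℝ 2 μ, 0 ≤ f → 0 ≤ A f)
    (hC_pos : ∀ f : Lp ℝ 2 μ, 0 ≤ f → 0 ≤ (adjoint A ∘L A - A ∘L adjoint A) f) :
    (∀ n : ℕ, 1 ≤ n →
      ∀ f : Lp ℝ 2 μ, 0 ≤ f → 0 ≤ (((adjoint A) ^ n) ∘L (A ^ n) - (adjoint A ∘L A) ^ n) f) ∧
    spectralRadius ℝ (adjoint A ∘L A) ≤ (spectralRadius ℝ A) ^ 2 := by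
  have hA : A ∈ positiveOperators (Lp ℝ 2 μ) := hA_pos
  have hA' := adjoint_mem_positiveOperators hA
  have hpow (n : ℕ) := (positiveOperators (Lp ℝ 2 μ)).pow_mul_pow_sub_mul_pow_mem hA hA' hC_pos n
  refine ⟨fun n _ => hpow n, ?_⟩
  rcases subsingleton_or_nontrivial (Lp ℝ 2 μ) with _ | _
  · simp
  calc spectralRadius ℝ (adjoint A ∘L A) ≤ ‖adjoint A ∘L A‖₊ := spectrum.spectralRadius_le_nnnorm _
    _ = (‖A‖₊ : ℝ≥0∞) ^ 2 := by
        rw [← ENNReal.coe_pow, ENNReal.coe_inj, ← NNReal.coe_inj]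
        simp [norm_adjoint_comp_self, sq]
    _ ≤ spectralRadius ℝ A ^ 2 := by
        gcongr
        exact nnnorm_le_spectralRadius_of_pow_norm_le hA
          fun n hn => pow_norm_le_norm_pow_of_adjoint_pow_mul_pow_sub_mem hA hA' hpow hn
end

section
/- Let d : ℕ → ℝ be a bounded sequence with dₙ ≥ 0 for all n, and let D be the bounded diagonal operator on ℓ² given by (D x)ₙ = dₙ xₙ. Then there exists a positive bounded linear operator X : ℓ² → L²[0,1] such that X* ∘ X = D, and there exists a positive self-adjoint bounded linear operator Y on L²[0,1] such that Y ∘ Y = X ∘ X*. -/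
/-!
Write `D = S ∘ S` with `S` the diagonal operator with entries `√dₙ`, which is self-adjoint and
positive. Normalised indicators `φₙ` of disjoint subintervals of `[0,1]` form an orthonormal family
of nonnegative functions, so `J x = ∑ xₙ φₙ` is a positive isometry `ℓ² → L²[0,1]` whose adjoint
`f ↦ (⟪φₙ, f⟫)ₙ` is positive as well. Then `X = J S` and `Y = J S J*` work, because `J* J = 1`.
-/

open MeasureTheory ContinuousLinearMap Set
open scoped ENNReal InnerProductSpace Function

section Memℓp

variable {ι : Type*} {p : ℝ≥0∞}

lemma Memℓp.exists_norm_mul_le {s : ι → ℝ} (hs : Memℓp s ∞) :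
    ∃ C, ∀ (f : ι → ℝ) i, ‖s i * f i‖ ≤ ‖C * f i‖ := by
  obtain ⟨C, hC⟩ := memℓp_infty_iff.mp hs
  refine ⟨C, fun f i => ?_⟩
  rw [norm_mul, norm_mul]
  gcongr
  exact (hC ⟨i, rfl⟩).trans (Real.le_norm_self C)

lemma Memℓp.mul_of_memℓp_infty {s f : ι → ℝ} (hs : Memℓp s ∞) (hf : Memℓp f p) :
    Memℓp (fun i => s i * f i) p :=
  have ⟨C, hC⟩ := hs.exists_norm_mul_le
  (hf.const_mul C).mono' (hC f)

end Memℓp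

namespace lp

variable {ι : Type*} {p : ℝ≥0∞} [Fact (1 ≤ p)]

noncomputable def diagonal (s : ι → ℝ) (hs : Memℓp s ∞) :
    lp (fun _ : ι => ℝ) p →L[ℝ] lp (fun _ : ι => ℝ) p :=
  LinearMap.mkContinuousOfExistsBound
    { toFun := fun x => ⟨fun i => s i * x i, hs.mul_of_memℓp_infty (lp.memℓp x)⟩
      map_add' := fun x y => lp.ext <| funext fun i => mul_add (s i) (x i) (y i)
      map_smul' := fun c x => lp.ext <| funext fun i => mul_left_comm (s i) c (x i) } <| by
    obtain ⟨C, hC⟩ := hs.exists_norm_mul_le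
    refine ⟨‖C‖, fun x => ?_⟩
    calc _ ≤ ‖C • x‖ := lp.norm_mono (zero_lt_one.trans_le Fact.out).ne' (hC x)
      _ ≤ ‖C‖ * ‖x‖ := lp.norm_const_smul_le (zero_lt_one.trans_le Fact.out).ne' C x

@[simp]
lemma diagonal_apply (s : ι → ℝ) (hs : Memℓp s ∞) (x : lp (fun _ : ι => ℝ) p) (i : ι) :
    diagonal s hs x i = s i * x i := rfl

lemma isSelfAdjoint_diagonal (s : ι → ℝ) (hs : Memℓp s ∞) :
    IsSelfAdjoint (diagonal (p := 2) s hs) := by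
  rw [isSelfAdjoint_iff_isSymmetric]
  intro x y
  simp only [coe_coe, lp.inner_eq_tsum, diagonal_apply]
  exact tsum_congr fun i => by simp only [RCLike.inner_apply, conj_trivial]; ring

end lp

section LpNonneg

variable {α : Type*} [MeasurableSpace α] {μ : Measure α}

lemma real_inner_nonneg_of_nonneg {f g : Lp ℝ 2 μ} (hf : 0 ≤ f) (hg : 0 ≤ g) : 0 ≤ ⟪f, g⟫_ℝ := by
  rw [L2.inner_def]
  refine integral_nonneg_of_ae ?_
  filter_upwards [(Lp.coeFn_nonneg f).2 hf, (Lp.coeFn_nonneg g).2 hg] with a hfa hga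
  exact mul_nonneg hga hfa

lemma MeasureTheory.Lp.smul_nonneg {p : ℝ≥0∞} {c : ℝ} (hc : 0 ≤ c) {f : Lp ℝ p μ} (hf : 0 ≤ f) :
    0 ≤ c • f := by
  rw [← Lp.coeFn_nonneg] at hf ⊢
  filter_upwards [Lp.coeFn_smul c f, hf] with a hfa ha
  rw [hfa]
  exact mul_nonneg hc ha

noncomputable def normalizedIndicatorLp {s : Set α} (hs : MeasurableSet s) (hμs : μ s ≠ ∞) :
    Lp ℝ 2 μ :=
  indicatorConstLp 2 hs hμs (√(μ.real s))⁻¹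

lemma normalizedIndicatorLp_nonneg {s : Set α} (hs : MeasurableSet s) (hμs : μ s ≠ ∞) :
    0 ≤ normalizedIndicatorLp hs hμs := by
  rw [← Lp.coeFn_nonneg]
  filter_upwards [indicatorConstLp_coeFn (p := 2) (hs := hs) (hμs := hμs) (c := (√(μ.real s))⁻¹)]
    with a ha
  rw [Pi.zero_apply, normalizedIndicatorLp, ha]
  exact indicator_nonneg (fun _ _ => by positivity) a

lemma orthonormal_normalizedIndicatorLp {ι : Type*} {s : ι → Set α}
    (hs : ∀ i, MeasurableSet (s i)) (hμs : ∀ i, μ (s i) ≠ ∞) (hμs₀ : ∀ i, μ (s i) ≠ 0)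
    (hdisj : Pairwise (Disjoint on s)) :
    Orthonormal ℝ fun i => normalizedIndicatorLp (hs i) (hμs i) := by
  classical
  rw [orthonormal_iff_ite]
  intro i j
  simp only [normalizedIndicatorLp, L2.inner_indicatorConstLp_indicatorConstLp]
  split_ifs with hij
  · subst hij
    have : 0 < μ.real (s i) := ENNReal.toReal_pos (hμs₀ i) (hμs i)
    rw [inter_self, smul_eq_mul, real_inner_self_eq_norm_sq, Real.norm_eq_abs, sq_abs, inv_pow,
      Real.sq_sqrt this.le, mul_inv_cancel₀ this.ne']
  · simp [(hdisj hij).inter_eq]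

end LpNonneg

namespace Orthonormal

variable {ι E : Type*} [NormedAddCommGroup E] [InnerProductSpace ℝ E] [CompleteSpace E]
  {v : ι → E}

noncomputable def synthesis (hv : Orthonormal ℝ v) : lp (fun _ : ι => ℝ) 2 →L[ℝ] E :=
  hv.orthogonalFamily.linearIsometry.toContinuousLinearMap

lemma hasSum_synthesis (hv : Orthonormal ℝ v) (x : lp (fun _ : ι => ℝ) 2) :
    HasSum (fun i => x i • v i) (hv.synthesis x) := by
  simpa [synthesis] using hv.orthogonalFamily.hasSum_linearIsometry x

lemma adjoint_synthesis_synthesis (hv : Orthonormal ℝ v) (x : lp (fun _ : ι => ℝ) 2) :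
    adjoint hv.synthesis (hv.synthesis x) = x :=
  congr($hv.orthogonalFamily.linearIsometry.adjoint_comp_self x)

lemma adjoint_synthesis_apply (hv : Orthonormal ℝ v) (f : E) (i : ι) :
    adjoint hv.synthesis f i = ⟪v i, f⟫_ℝ := by
  classical
  have hsingle : hv.synthesis (lp.single 2 i 1) = v i := by
    simp [synthesis]
  rw [← hsingle, ← adjoint_inner_right, lp.inner_single_left]
  simp

end Orthonormal

section Positivity

variable {ι α : Type*} [MeasurableSpace α] {μ : Measure α} {v : ι → Lp ℝ 2 μ}

lemma Orthonormal.synthesis_nonneg (hv : Orthonormal ℝ v) (hv₀ : ∀ i, 0 ≤ v i)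
    {x : lp (fun _ : ι => ℝ) 2} (hx : ∀ i, 0 ≤ x i) : 0 ≤ hv.synthesis x :=
  hasSum_le (fun i => Lp.smul_nonneg (hx i) (hv₀ i)) hasSum_zero (hv.hasSum_synthesis x)

lemma Orthonormal.adjoint_synthesis_nonneg (hv : Orthonormal ℝ v) (hv₀ : ∀ i, 0 ≤ v i)
    {f : Lp ℝ 2 μ} (hf : 0 ≤ f) (i : ι) : 0 ≤ adjoint hv.synthesis f i := by
  rw [hv.adjoint_synthesis_apply]
  exact real_inner_nonneg_of_nonneg (hv₀ i) hf

end Positivity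

lemma exists_orthonormal_nonneg_Lp_unitInterval :
    ∃ v : ℕ → Lp ℝ 2 (volume : Measure (Icc (0:ℝ) 1)), Orthonormal ℝ v ∧ ∀ n, 0 ≤ v n := by
  set a : ℕ → ℝ := fun n => 1 - ((n : ℝ) + 1)⁻¹
  have ha : StrictMono a := fun m n h => by simp only [a]; gcongr
  have ha_mem (n : ℕ) : a n ∈ Icc (0:ℝ) 1 :=
    ⟨sub_nonneg.mpr (inv_le_one_of_one_le₀ (by simp)), sub_le_self _ (by positivity)⟩
  set s : ℕ → Set (Icc (0:ℝ) 1) := fun n => Subtype.val ⁻¹' Ico (a n) (a (n + 1))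
  have hs (n : ℕ) : MeasurableSet (s n) := measurableSet_Ico.preimage measurable_subtype_coe
  have hvol (n : ℕ) : volume (s n) = ENNReal.ofReal (a (n + 1) - a n) := by
    rw [volume_preimage_coe measurableSet_Icc.nullMeasurableSet measurableSet_Ico,
      inter_eq_left.mpr (Ico_subset_Icc_self.trans (Icc_subset_Icc (ha_mem n).1 (ha_mem _).2)),
      Real.volume_Ico]
  have hdisj : Pairwise (Disjoint on s) := fun m n h =>
    (ha.monotone.pairwise_disjoint_on_Ico_succ h).preimage _
  have hfin (n : ℕ) : volume (s n) ≠ ∞ := by simp [hvol]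
  have hpos (n : ℕ) : volume (s n) ≠ 0 := by simpa [hvol] using ha (Nat.lt_succ_self n)
  exact ⟨fun n => normalizedIndicatorLp (hs n) (hfin n),
    orthonormal_normalizedIndicatorLp hs hfin hpos hdisj, fun n => normalizedIndicatorLp_nonneg _ _⟩

/-- Every positive bounded diagonal operator `D` on `ℓ²` factors through `L²[0,1]` as `D = X*X`
for some positive operator `X : ℓ² → L²[0,1]`; moreover there is a positive self-adjoint operator
`Y` on `L²[0,1]` with `Y² = XX*`. -/
theorem diagonal_operator_factors_positively_through_L2
    (d : ℕ → ℝ) (hd_nonneg : ∀ n, 0 ≤ d n) (hd_bdd : ∃ M : ℝ, ∀ n, d n ≤ M)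
    (D : lp (fun _ : ℕ => ℝ) 2 →L[ℝ] lp (fun _ : ℕ => ℝ) 2)
    (hD : ∀ (x : lp (fun _ : ℕ => ℝ) 2) (n : ℕ), D x n = d n * x n) :
    ∃ X : lp (fun _ : ℕ => ℝ) 2 →L[ℝ] Lp ℝ 2 (volume : Measure (Set.Icc (0:ℝ) 1)),
      (∀ x : lp (fun _ : ℕ => ℝ) 2, (∀ n, 0 ≤ x n) → 0 ≤ X x) ∧
      adjoint X ∘L X = D ∧
      ∃ Y : Lp ℝ 2 (volume : Measure (Set.Icc (0:ℝ) 1)) →L[ℝ]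
          Lp ℝ 2 (volume : Measure (Set.Icc (0:ℝ) 1)),
        (∀ f, 0 ≤ f → 0 ≤ Y f) ∧ adjoint Y = Y ∧ Y ∘L Y = X ∘L adjoint X := by
  obtain ⟨M, hM⟩ := hd_bdd
  have hsqrt : Memℓp (fun n => √(d n)) ∞ := memℓp_infty ⟨√M, by
    rintro _ ⟨n, rfl⟩
    simpa [abs_of_nonneg (Real.sqrt_nonneg _)] using Real.sqrt_le_sqrt (hM n)⟩
  set S : lp (fun _ : ℕ => ℝ) 2 →L[ℝ] lp (fun _ : ℕ => ℝ) 2 := lp.diagonal _ hsqrt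
  have hS_nonneg {x : lp (fun _ : ℕ => ℝ) 2} (hx : ∀ n, 0 ≤ x n) (n : ℕ) : 0 ≤ S x n :=
    mul_nonneg (Real.sqrt_nonneg _) (hx n)
  have hS_adj : adjoint S = S := (lp.isSelfAdjoint_diagonal _ hsqrt).adjoint_eq
  have hSS : S ∘L S = D := by
    ext x n
    simp [S, hD, ← mul_assoc, Real.mul_self_sqrt (hd_nonneg n)]
  obtain ⟨v, hv, hv₀⟩ := exists_orthonormal_nonneg_Lp_unitInterval
  refine ⟨hv.synthesis ∘L S, fun x hx => hv.synthesis_nonneg hv₀ (hS_nonneg hx), ?_,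
    hv.synthesis ∘L S ∘L adjoint hv.synthesis,
    fun f hf => hv.synthesis_nonneg hv₀ (hS_nonneg (hv.adjoint_synthesis_nonneg hv₀ hf)), ?_, ?_⟩
  · ext1 x
    simp [adjoint_comp, hS_adj, hv.adjoint_synthesis_synthesis, ← hSS]
  · rw [adjoint_comp, adjoint_comp, adjoint_adjoint, hS_adj, comp_assoc]
  · ext1 f
    simp [adjoint_comp, hS_adj, hv.adjoint_synthesis_synthesis]
end

section
/- Let n be a positive integer, let d : Fin n → ℝ satisfy dₖ ≥ 0 for all k, and let D be the diagonal operator on the Euclidean space ℝⁿ given by (D x)ₖ = dₖ xₖ. Then there exists a positive bounded linear operator X : ℝⁿ → L²[0,1] such that X* ∘ X = D, and there exists a positive self-adjoint bounded linear operator Y on L²[0,1] such that Y ∘ Y = X ∘ X*. -/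
/-!
Let `φₖ` be the normalized indicators of the intervals `[k/n, (k+1)/n)`: a nonnegative orthonormal
family in `L²[0,1]`. The map `V : ℝⁿ → L²`, `eₖ ↦ φₖ`, is an isometry (`V*V = 1`), and both `V` and
`V* f = (⟪φₖ, f⟫)ₖ` preserve positivity. With `S` the diagonal operator with entries `√dₖ`, the
operators `X = V S` and `Y = V S V*` work: `X*X = S V*V S = S² = D`, `Y` is self-adjoint, and
`Y² = V S (V*V) S V* = X X*`.
-/

open MeasureTheory ContinuousLinearMap Matrix
open scoped RealInnerProductSpace

section IsometryConj

variable {𝕜 E F : Type*} [RCLike 𝕜] [NormedAddCommGroup E] [InnerProductSpace 𝕜 E] [CompleteSpace E]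
  [NormedAddCommGroup F] [InnerProductSpace 𝕜 F] [CompleteSpace F]
  {V : F →L[𝕜] E} {S : F →L[𝕜] F}

lemma adjoint_comp_self_of_adjoint_comp_self_eq_one (hV : adjoint V ∘L V = 1)
    (hS : IsSelfAdjoint S) : adjoint (V ∘L S) ∘L (V ∘L S) = S ∘L S := by
  rw [adjoint_comp, hS.adjoint_eq, comp_assoc, ← comp_assoc (adjoint V), hV, one_def, id_comp]

lemma conj_comp_conj_of_adjoint_comp_self_eq_one (hV : adjoint V ∘L V = 1)
    (hS : IsSelfAdjoint S) :
    (V ∘L S ∘L adjoint V) ∘L (V ∘L S ∘L adjoint V) = (V ∘L S) ∘L adjoint (V ∘L S) := by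
  simp only [adjoint_comp, hS.adjoint_eq, comp_assoc]
  rw [← comp_assoc (adjoint V), hV, one_def, id_comp]

end IsometryConj

section LinearCombination

variable {𝕜 E ι : Type*} [RCLike 𝕜] [NormedAddCommGroup E] [NormedSpace 𝕜 E] [Fintype ι]

noncomputable def linearCombinationCLM (v : ι → E) : EuclideanSpace 𝕜 ι →L[𝕜] E :=
  ∑ i, (EuclideanSpace.proj i).smulRight (v i)

@[simp]
lemma linearCombinationCLM_apply (v : ι → E) (x : EuclideanSpace 𝕜 ι) :
    linearCombinationCLM v x = ∑ i, x i • v i := by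
  simp [linearCombinationCLM]

end LinearCombination

section AdjointLinearCombination

variable {𝕜 E ι : Type*} [RCLike 𝕜] [NormedAddCommGroup E] [InnerProductSpace 𝕜 E] [CompleteSpace E]
  [Fintype ι]

lemma adjoint_linearCombinationCLM_apply [DecidableEq ι] (v : ι → E) (f : E) (i : ι) :
    adjoint (linearCombinationCLM (𝕜 := 𝕜) v) f i = inner 𝕜 (v i) f := by
  simpa [EuclideanSpace.inner_single_left, PiLp.single_apply] using
    adjoint_inner_right (linearCombinationCLM (𝕜 := 𝕜) v) (EuclideanSpace.single i 1) f

lemma Orthonormal.adjoint_linearCombinationCLM_comp_self {v : ι → E} (hv : Orthonormal 𝕜 v) :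
    adjoint (linearCombinationCLM (𝕜 := 𝕜) v) ∘L linearCombinationCLM v = 1 := by
  refine (inner_map_map_iff_adjoint_comp_self _).mp fun x y => ?_
  simp [hv.inner_sum, PiLp.inner_apply, mul_comm]

end AdjointLinearCombination

namespace MeasureTheory

variable {α : Type*} [MeasurableSpace α] {μ : Measure α}

lemma Lp.smul_nonneg_s4 {p : ENNReal} [Fact (1 ≤ p)] {c : ℝ} (hc : 0 ≤ c) {f : Lp ℝ p μ}
    (hf : 0 ≤ f) : 0 ≤ c • f := by
  rw [← Lp.coeFn_nonneg] at hf ⊢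
  filter_upwards [Lp.coeFn_smul c f, hf] with x hcf hfx
  rw [hcf]
  exact mul_nonneg hc hfx

lemma L2.inner_nonneg {f g : Lp ℝ 2 μ} (hf : 0 ≤ f) (hg : 0 ≤ g) : 0 ≤ ⟪f, g⟫ := by
  rw [L2.inner_def]
  refine integral_nonneg_of_ae ?_
  filter_upwards [(Lp.coeFn_nonneg f).mpr hf, (Lp.coeFn_nonneg g).mpr hg] with x hfx hgx
  exact mul_nonneg hgx hfx

noncomputable def normalizedIndicator {s : Set α} (hs : MeasurableSet s) (hμs : μ s ≠ ⊤) :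
    Lp ℝ 2 μ :=
  indicatorConstLp 2 hs hμs (√(μ.real s))⁻¹

lemma normalizedIndicator_nonneg {s : Set α} (hs : MeasurableSet s) (hμs : μ s ≠ ⊤) :
    0 ≤ normalizedIndicator hs hμs := by
  rw [← Lp.coeFn_nonneg, normalizedIndicator]
  filter_upwards [indicatorConstLp_coeFn (p := 2) (hs := hs) (hμs := hμs) (c := (√(μ.real s))⁻¹)]
    with x hx
  rw [hx]
  exact Set.indicator_nonneg (fun _ _ => by positivity) x

open Function in
lemma orthonormal_normalizedIndicator {ι : Type*} {s : ι → Set α} (hs : ∀ i, MeasurableSet (s i))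
    (hμs : ∀ i, μ (s i) ≠ ⊤) (hμs₀ : ∀ i, μ (s i) ≠ 0) (hdisj : Pairwise (Disjoint on s)) :
    Orthonormal ℝ fun i => normalizedIndicator (hs i) (hμs i) := by
  classical
  refine orthonormal_iff_ite.mpr fun i j => ?_
  rw [normalizedIndicator, normalizedIndicator,
    L2.inner_indicatorConstLp_indicatorConstLp (hs i) (hs j) (hμs i) (hμs j)]
  split_ifs with hij
  · subst hij
    have hpos : μ.real (s i) ≠ 0 := (ENNReal.toReal_pos (hμs₀ i) (hμs i)).ne'
    simp [hpos]
  · simp [(hdisj hij).inter_eq]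

end MeasureTheory

section LinearCombinationNonneg

variable {α ι : Type*} [MeasurableSpace α] {μ : Measure α} [Fintype ι]

lemma linearCombinationCLM_nonneg {p : ENNReal} [Fact (1 ≤ p)] {v : ι → Lp ℝ p μ}
    (hv : ∀ i, 0 ≤ v i) {x : EuclideanSpace ℝ ι} (hx : ∀ i, 0 ≤ x i) :
    0 ≤ linearCombinationCLM v x := by
  rw [linearCombinationCLM_apply]
  exact Finset.sum_nonneg fun i _ => MeasureTheory.Lp.smul_nonneg_s4 (hx i) (hv i)

lemma adjoint_linearCombinationCLM_nonneg [DecidableEq ι] {v : ι → Lp ℝ 2 μ}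
    (hv : ∀ i, 0 ≤ v i) {f : Lp ℝ 2 μ} (hf : 0 ≤ f) (i : ι) :
    0 ≤ adjoint (linearCombinationCLM (𝕜 := ℝ) v) f i := by
  rw [adjoint_linearCombinationCLM_apply]
  exact MeasureTheory.L2.inner_nonneg (hv i) hf

end LinearCombinationNonneg

section UnitIntervalPieces

def unitIntervalPiece (n k : ℕ) : Set (Set.Icc (0 : ℝ) 1) :=
  Subtype.val ⁻¹' Set.Ico ((k : ℝ) / n) ((k + 1 : ℕ) / n)

lemma measurableSet_unitIntervalPiece (n k : ℕ) : MeasurableSet (unitIntervalPiece n k) :=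
  measurable_subtype_coe measurableSet_Ico

open Function in
lemma pairwise_disjoint_unitIntervalPiece (n : ℕ) :
    Pairwise (Disjoint on unitIntervalPiece n) := by
  have hmono : Monotone fun k : ℕ => (k : ℝ) / n := fun a b hab =>
    div_le_div_of_nonneg_right (Nat.cast_le.mpr hab) n.cast_nonneg
  exact fun a b hab => (hmono.pairwise_disjoint_on_Ico_succ hab).preimage _

lemma volume_unitIntervalPiece {n k : ℕ} (hk : k < n) :
    volume (unitIntervalPiece n k) = ENNReal.ofReal (1 / n) := by
  have hn : (0 : ℝ) < n := by exact_mod_cast (Nat.zero_le k).trans_lt hk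
  have hsub : Set.Ico ((k : ℝ) / n) ((k + 1 : ℕ) / n) ⊆ Set.Icc 0 1 := by
    refine Set.Ico_subset_Icc_self.trans (Set.Icc_subset_Icc (by positivity) ?_)
    rw [div_le_one hn]
    exact_mod_cast hk
  rw [unitIntervalPiece, volume_preimage_coe measurableSet_Icc.nullMeasurableSet measurableSet_Ico,
    Set.inter_eq_self_of_subset_left hsub, Real.volume_Ico]
  congr 1
  push_cast
  ring

end UnitIntervalPieces

section Diagonal

variable {ι : Type*} [Fintype ι] [DecidableEq ι]

@[simp]
lemma toEuclideanCLM_diagonal_apply (c : ι → ℝ) (x : EuclideanSpace ℝ ι) (i : ι) :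
    toEuclideanCLM (𝕜 := ℝ) (diagonal c) x i = c i * x i := by
  simp [mulVec_diagonal]

lemma isSelfAdjoint_toEuclideanCLM_diagonal (c : ι → ℝ) :
    IsSelfAdjoint (toEuclideanCLM (𝕜 := ℝ) (diagonal c)) :=
  IsSelfAdjoint.map (isHermitian_diagonal c) toEuclideanCLM

end Diagonal

theorem diagonal_matrix_factors_positively_through_L2_general
    (n : ℕ) (d : Fin n → ℝ) (hd_nonneg : ∀ k, 0 ≤ d k)
    (D : EuclideanSpace ℝ (Fin n) →L[ℝ] EuclideanSpace ℝ (Fin n))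
    (hD : ∀ (x : EuclideanSpace ℝ (Fin n)) (k : Fin n), D x k = d k * x k) :
    ∃ X : EuclideanSpace ℝ (Fin n) →L[ℝ] Lp ℝ 2 (volume : Measure (Set.Icc (0:ℝ) 1)),
      (∀ x : EuclideanSpace ℝ (Fin n), (∀ k, 0 ≤ x k) → 0 ≤ X x) ∧
      adjoint X ∘L X = D ∧
      ∃ Y : Lp ℝ 2 (volume : Measure (Set.Icc (0:ℝ) 1)) →L[ℝ]
          Lp ℝ 2 (volume : Measure (Set.Icc (0:ℝ) 1)),
        (∀ f, 0 ≤ f → 0 ≤ Y f) ∧ adjoint Y = Y ∧ Y ∘L Y = X ∘L adjoint X := by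
  let φ : Fin n → Lp ℝ 2 (volume : Measure (Set.Icc (0:ℝ) 1)) := fun k =>
    normalizedIndicator (measurableSet_unitIntervalPiece n k) (measure_ne_top _ _)
  have hφ_nonneg : ∀ k, 0 ≤ φ k := fun k => normalizedIndicator_nonneg _ _
  have hφ : Orthonormal ℝ φ := by
    refine orthonormal_normalizedIndicator _ _ (fun k => ?_)
      ((pairwise_disjoint_unitIntervalPiece n).comp_of_injective Fin.val_injective)
    rw [volume_unitIntervalPiece k.isLt, ne_eq, ENNReal.ofReal_eq_zero, not_le]
    exact one_div_pos.mpr (Nat.cast_pos.mpr k.pos)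
  let V := linearCombinationCLM (𝕜 := ℝ) φ
  let S := toEuclideanCLM (𝕜 := ℝ) (diagonal fun k => √(d k))
  have hV : adjoint V ∘L V = 1 := hφ.adjoint_linearCombinationCLM_comp_self
  have hS : IsSelfAdjoint S := isSelfAdjoint_toEuclideanCLM_diagonal _
  have hSS : S ∘L S = D := by
    ext x k
    simp [S, hD, ← mul_assoc, Real.mul_self_sqrt (hd_nonneg k)]
  have hS_nonneg : ∀ x, (∀ k, 0 ≤ x k) → ∀ k, 0 ≤ S x k := fun x hx k => by
    simpa [S] using mul_nonneg (Real.sqrt_nonneg (d k)) (hx k)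
  refine ⟨V ∘L S, fun x hx => linearCombinationCLM_nonneg hφ_nonneg (hS_nonneg x hx),
    by rw [adjoint_comp_self_of_adjoint_comp_self_eq_one hV hS, hSS], V ∘L S ∘L adjoint V,
    fun f hf => linearCombinationCLM_nonneg hφ_nonneg
      (hS_nonneg _ (adjoint_linearCombinationCLM_nonneg hφ_nonneg hf)),
    (hS.conj_adjoint V).adjoint_eq, conj_comp_conj_of_adjoint_comp_self_eq_one hV hS⟩

/-- Every positive diagonal operator `D` on the Euclidean lattice `ℝⁿ` factors through `L²[0,1]`
as `D = X*X` for some positive operator `X : ℝⁿ → L²[0,1]`; moreover there is a positive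
self-adjoint operator `Y` on `L²[0,1]` with `Y² = XX*`. -/
theorem diagonal_matrix_factors_positively_through_L2
    (n : ℕ) (hn : 0 < n) (d : Fin n → ℝ) (hd_nonneg : ∀ k, 0 ≤ d k)
    (D : EuclideanSpace ℝ (Fin n) →L[ℝ] EuclideanSpace ℝ (Fin n))
    (hD : ∀ (x : EuclideanSpace ℝ (Fin n)) (k : Fin n), D x k = d k * x k) :
    ∃ X : EuclideanSpace ℝ (Fin n) →L[ℝ] Lp ℝ 2 (volume : Measure (Set.Icc (0:ℝ) 1)),
      (∀ x : EuclideanSpace ℝ (Fin n), (∀ k, 0 ≤ x k) → 0 ≤ X x) ∧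
      adjoint X ∘L X = D ∧
      ∃ Y : Lp ℝ 2 (volume : Measure (Set.Icc (0:ℝ) 1)) →L[ℝ]
          Lp ℝ 2 (volume : Measure (Set.Icc (0:ℝ) 1)),
        (∀ f, 0 ≤ f → 0 ≤ Y f) ∧ adjoint Y = Y ∧ Y ∘L Y = X ∘L adjoint X :=
  diagonal_matrix_factors_positively_through_L2_general n d hd_nonneg D hD
end

section
/- Let p be a real number with 1 < p < ∞. There is no positive linear isometry V : Lᵖ[0,1] → ℓᵖ; that is, there is no linear map V from Lᵖ[0,1] to ℓᵖ such that ‖V f‖ = ‖f‖ for all f and V f ≥ 0 whenever f ≥ 0. -/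
/-!
Each coordinate `f ↦ V f k` of a positive isometry is additive, and it cannot be nonzero on two
disjoint indicators: for `u, v ≥ 0` in `ℓᵖ`, `‖u - v‖ = ‖u + v‖` forces `u` and `v` to have
disjoint supports, while `‖1_s - 1_t‖ = ‖1_s + 1_t‖` for disjoint `s, t`. Bisecting `(0,1]`
repeatedly therefore yields intervals of length `2⁻ⁿ` on whose indicator the `k`-th coordinate
equals its value on `1_(0,1]`, which is hence bounded by `2^(-n/p)` and vanishes. So `V` kills
`1_(0,1]`, a function of norm `1`.
-/

open MeasureTheory Filter Topology
open scoped ENNReal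

lemma lp.apply_eq_zero_or_apply_eq_zero_of_norm_sub_eq_norm_add {ι : Type*} {p : ℝ≥0∞}
    (hp : 0 < p.toReal) {u v : lp (fun _ : ι => ℝ) p} (hu : ∀ i, 0 ≤ u i) (hv : ∀ i, 0 ≤ v i)
    (huv : ‖u - v‖ = ‖u + v‖) (i : ι) : u i = 0 ∨ v i = 0 := by
  by_contra! h
  have hle : ∀ j, ‖(u - v) j‖ ^ p.toReal ≤ ‖(u + v) j‖ ^ p.toReal := fun j => by
    gcongr
    simp only [lp.coeFn_sub, lp.coeFn_add, Pi.sub_apply, Pi.add_apply, Real.norm_eq_abs,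
      abs_of_nonneg (add_nonneg (hu j) (hv j))]
    exact abs_sub_le_of_nonneg_of_le (hu j) (by linarith [hv j]) (hv j) (by linarith [hu j])
  have hlt : ‖(u - v) i‖ ^ p.toReal < ‖(u + v) i‖ ^ p.toReal := by
    have hui := (hu i).lt_of_ne' h.1
    have hvi := (hv i).lt_of_ne' h.2
    gcongr
    simp only [lp.coeFn_sub, lp.coeFn_add, Pi.sub_apply, Pi.add_apply, Real.norm_eq_abs,
      abs_of_pos (add_pos hui hvi)]
    exact abs_sub_lt_iff.mpr ⟨by linarith, by linarith⟩
  refine (Summable.tsum_lt_tsum hle hlt ((lp.memℓp _).summable hp)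
    ((lp.memℓp _).summable hp)).ne ?_
  rw [← lp.norm_rpow_eq_tsum hp, ← lp.norm_rpow_eq_tsum hp, huv]

namespace MeasureTheory

variable {α : Type*} [MeasurableSpace α] {μ : Measure α} {p : ℝ≥0∞} {s t : Set α}

lemma norm_indicatorConstLp_sub_eq_norm_add {E : Type*} [NormedAddCommGroup E]
    (hs : MeasurableSet s) (ht : MeasurableSet t) (hμs : μ s ≠ ∞) (hμt : μ t ≠ ∞)
    (hst : Disjoint s t) (c : E) :
    ‖indicatorConstLp p hs hμs c - indicatorConstLp p ht hμt c‖ =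
      ‖indicatorConstLp p hs hμs c + indicatorConstLp p ht hμt c‖ := by
  rw [Lp.norm_def, Lp.norm_def]
  congr 1
  apply eLpNorm_congr_norm_ae
  filter_upwards [Lp.coeFn_sub (indicatorConstLp p hs hμs c) (indicatorConstLp p ht hμt c),
    Lp.coeFn_add (indicatorConstLp p hs hμs c) (indicatorConstLp p ht hμt c),
    indicatorConstLp_coeFn (p := p) (hs := hs) (hμs := hμs) (c := c),
    indicatorConstLp_coeFn (p := p) (hs := ht) (hμs := hμt) (c := c)] with x hsub hadd hxs hxt
  rw [hsub, hadd, Pi.sub_apply, Pi.add_apply, hxs, hxt]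
  by_cases hx : x ∈ s
  · simp [hx, Set.disjoint_left.mp hst hx]
  · simp [hx]

lemma indicatorConstLp_nonneg (hs : MeasurableSet s) (hμs : μ s ≠ ∞) {c : ℝ} (hc : 0 ≤ c) :
    0 ≤ indicatorConstLp p hs hμs c := by
  rw [← Lp.coeFn_nonneg]
  filter_upwards [indicatorConstLp_coeFn (p := p) (hs := hs) (hμs := hμs) (c := c)] with x hx
  rw [hx]
  exact Set.indicator_nonneg (fun _ _ => hc) x

lemma apply_indicatorConstLp_eq_zero_or_of_disjoint {ι : Type*} (hp : 0 < p.toReal)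
    (V : Lp ℝ p μ →ₗ[ℝ] lp (fun _ : ι => ℝ) p) (hiso : ∀ f, ‖V f‖ = ‖f‖)
    (hpos : ∀ f, 0 ≤ f → ∀ i, 0 ≤ V f i) (hs : MeasurableSet s) (ht : MeasurableSet t)
    (hμs : μ s ≠ ∞) (hμt : μ t ≠ ∞) (hst : Disjoint s t) (i : ι) :
    V (indicatorConstLp p hs hμs 1) i = 0 ∨ V (indicatorConstLp p ht hμt 1) i = 0 :=
  lp.apply_eq_zero_or_apply_eq_zero_of_norm_sub_eq_norm_add hp
    (hpos _ (indicatorConstLp_nonneg hs hμs zero_le_one))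
    (hpos _ (indicatorConstLp_nonneg ht hμt zero_le_one))
    (by rw [← map_sub, ← map_add, hiso, hiso,
      norm_indicatorConstLp_sub_eq_norm_add hs ht hμs hμt hst]) i

end MeasureTheory

lemma eq_zero_of_bisection {φ : ℝ → ℝ → ℝ} {r : ℝ} (hr : 0 < r)
    (hadd : ∀ a b, 0 ≤ a → a ≤ b → b ≤ 1 → φ a b = φ a ((a + b) / 2) + φ ((a + b) / 2) b)
    (hhalf : ∀ a b, 0 ≤ a → a ≤ b → b ≤ 1 → φ a ((a + b) / 2) = 0 ∨ φ ((a + b) / 2) b = 0)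
    (hbound : ∀ a b, 0 ≤ a → a ≤ b → b ≤ 1 → |φ a b| ≤ (b - a) ^ r) :
    φ 0 1 = 0 := by
  have hnest : ∀ n : ℕ, ∃ a, 0 ≤ a ∧ a + (1 / 2) ^ n ≤ 1 ∧ φ a (a + (1 / 2) ^ n) = φ 0 1 := by
    intro n
    induction n with
    | zero => exact ⟨0, le_rfl, by norm_num, by norm_num⟩
    | succ n ih =>
      obtain ⟨a, ha, hb, hφ⟩ := ih
      have hlen : (0 : ℝ) ≤ (1 / 2) ^ n := by positivity
      have hmid : (a + (a + (1 / 2) ^ n)) / 2 = a + (1 / 2) ^ (n + 1) := by ring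
      have hsplit := hadd a _ ha (by linarith) hb
      rw [hmid] at hsplit
      rcases hhalf a _ ha (by linarith) hb with h | h <;> rw [hmid] at h
      · refine ⟨a + (1 / 2) ^ (n + 1), by positivity, ?_, ?_⟩
        · rw [pow_succ]; linarith
        · rw [← hφ, hsplit, h, zero_add, pow_succ]; ring_nf
      · exact ⟨a, ha, by rw [pow_succ]; linarith, by rw [← hφ, hsplit, h, add_zero]⟩
  have hle : ∀ n : ℕ, |φ 0 1| ≤ ((1 / 2 : ℝ) ^ n) ^ r := fun n => by
    obtain ⟨a, ha, hb, hφ⟩ := hnest n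
    have h := hbound a _ ha (le_add_of_nonneg_right (by positivity)) hb
    rwa [hφ, add_sub_cancel_left] at h
  have hlim : Tendsto (fun n : ℕ => ((1 / 2 : ℝ) ^ n) ^ r) atTop (𝓝 0) := by
    simpa [Real.zero_rpow hr.ne'] using
      (tendsto_pow_atTop_nhds_zero_of_lt_one (r := (1 / 2 : ℝ)) (by norm_num)
        (by norm_num)).rpow_const (Or.inr hr.le)
  exact abs_nonpos_iff.mp (ge_of_tendsto' hlim hle)

def unitIoc (a b : ℝ) : Set (Set.Icc (0 : ℝ) 1) := Subtype.val ⁻¹' Set.Ioc a b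

lemma measurableSet_unitIoc (a b : ℝ) : MeasurableSet (unitIoc a b) :=
  measurable_subtype_coe measurableSet_Ioc

lemma volume_unitIoc {a b : ℝ} (ha : 0 ≤ a) (hb : b ≤ 1) :
    volume (unitIoc a b) = ENNReal.ofReal (b - a) := by
  rw [Measure.Subtype.volume_def,
    (MeasurableEmbedding.subtype_coe measurableSet_Icc).comap_apply, unitIoc,
    Set.image_preimage_eq_inter_range, Subtype.range_coe,
    Set.inter_eq_left.mpr (Set.Ioc_subset_Icc_self.trans (Set.Icc_subset_Icc ha hb)),
    Real.volume_Ioc]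

lemma disjoint_unitIoc (a m b : ℝ) : Disjoint (unitIoc a m) (unitIoc m b) :=
  (Set.Ioc_disjoint_Ioc_of_le le_rfl).preimage _

lemma unitIoc_union {a m b : ℝ} (ham : a ≤ m) (hmb : m ≤ b) :
    unitIoc a m ∪ unitIoc m b = unitIoc a b := by
  rw [unitIoc, unitIoc, unitIoc, ← Set.preimage_union, Set.Ioc_union_Ioc_eq_Ioc ham hmb]

noncomputable def indicatorIoc (p : ℝ≥0∞) (a b : ℝ) :
    Lp ℝ p (volume : Measure (Set.Icc (0 : ℝ) 1)) :=
  indicatorConstLp p (measurableSet_unitIoc a b) (measure_ne_top _ _) 1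

lemma indicatorIoc_add (p : ℝ≥0∞) {a m b : ℝ} (ham : a ≤ m) (hmb : m ≤ b) :
    indicatorIoc p a m + indicatorIoc p m b = indicatorIoc p a b := by
  rw [indicatorIoc, indicatorIoc,
    ← indicatorConstLp_disjoint_union _ _ _ _ (disjoint_unitIoc a m b)]
  simp_rw [indicatorIoc, unitIoc_union ham hmb]

lemma norm_indicatorIoc {p : ℝ≥0∞} (hp0 : p ≠ 0) (hp : p ≠ ∞) {a b : ℝ} (ha : 0 ≤ a)
    (hab : a ≤ b) (hb : b ≤ 1) : ‖indicatorIoc p a b‖ = (b - a) ^ (1 / p.toReal) := by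
  rw [indicatorIoc, norm_indicatorConstLp hp0 hp, measureReal_def, volume_unitIoc ha hb,
    ENNReal.toReal_ofReal (sub_nonneg.mpr hab), norm_one, one_mul]

/-- For `1 < p < ∞` there is no positive linear isometry `V : Lᵖ[0,1] → ℓᵖ`. -/
theorem no_positive_linear_isometry_Lp_to_lp
    (p : ℝ≥0∞) (hp1 : 1 < p) (hp2 : p ≠ ⊤) :
    ¬ ∃ V : Lp ℝ p (volume : Measure (Set.Icc (0:ℝ) 1)) →ₗ[ℝ] lp (fun _ : ℕ => ℝ) p,
        (∀ f, ‖V f‖ = ‖f‖) ∧ (∀ f, 0 ≤ f → ∀ n, 0 ≤ V f n) := by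
  rintro ⟨V, hiso, hpos⟩
  have hp0 : p ≠ 0 := (zero_lt_one.trans hp1).ne'
  have hp : 0 < p.toReal := ENNReal.toReal_pos hp0 hp2
  have hcoord (k : ℕ) : V (indicatorIoc p 0 1) k = 0 :=
    eq_zero_of_bisection (φ := fun a b => V (indicatorIoc p a b) k) (one_div_pos.mpr hp)
      (fun a b _ hab _ => by
        rw [← indicatorIoc_add p (by linarith : a ≤ (a + b) / 2) (by linarith), map_add,
          lp.coeFn_add, Pi.add_apply])
      (fun a b _ _ _ => apply_indicatorConstLp_eq_zero_or_of_disjoint hp V hiso hpos _ _ _ _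
        (disjoint_unitIoc _ _ _) k)
      (fun a b ha hab hb => (lp.norm_apply_le_norm hp0 _ k).trans_eq
        (by rw [hiso, norm_indicatorIoc hp0 hp2 ha hab hb]))
  have hV : V (indicatorIoc p 0 1) = 0 := lp.ext (funext hcoord)
  have hnorm := hiso (indicatorIoc p 0 1)
  rw [hV, norm_indicatorIoc hp0 hp2 le_rfl zero_le_one le_rfl] at hnorm
  norm_num at hnorm
end

section
/- Let p be a real number with 1 < p < ∞, let (Ω, μ) be a measure space, and let V : Lᵖ(μ; ℝ) → ℓᵖ be a positive linear isometry. Then V preserves disjointness of positive elements: if f, g ∈ Lᵖ(μ; ℝ) satisfy f ≥ 0, g ≥ 0 and f ⊓ g = 0, then (V f) ⊓ (V g) = 0. -/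
/-!
In a normed lattice such as `Lᵖ` (`p ≥ 1`), elements with `f ⊓ g = 0` satisfy
`|f - g| = f ⊔ g = f + g = |f + g|`, so `‖f - g‖ = ‖f + g‖`, and the isometry carries this equality
over to `a = V f`, `b = V g`. In `ℓᵖ` with `p < ∞`, however, `|aₙ - bₙ| ≤ aₙ + bₙ` for positive
sequences, strictly wherever `aₙ ⊓ bₙ > 0`; as the norm is strictly monotone in each coordinate,
equality of the norms forces `aₙ ⊓ bₙ = 0` for every `n`.
-/

open MeasureTheory
open scoped ENNReal

theorem abs_sub_eq_add_of_inf_eq_zero {α : Type*} [AddCommGroup α] [Lattice α] [AddLeftMono α]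
    {a b : α} (h : a ⊓ b = 0) : |a - b| = a + b := by
  rw [abs_sub_comm, ← sup_sub_inf_eq_abs_sub, h, sub_zero, ← inf_add_sup, h, zero_add]

theorem norm_sub_eq_norm_add_of_inf_eq_zero {α : Type*} [NormedAddCommGroup α] [Lattice α]
    [HasSolidNorm α] [IsOrderedAddMonoid α] {a b : α} (h : a ⊓ b = 0) : ‖a - b‖ = ‖a + b‖ := by
  rw [← norm_abs_eq_norm (a - b), abs_sub_eq_add_of_inf_eq_zero h,
    ← abs_sub_eq_add_of_inf_eq_zero h, norm_abs_eq_norm]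

namespace lp

variable {ι : Type*} {p : ℝ≥0∞}

theorem norm_lt_norm_of_forall_le_of_exists_lt {E : ι → Type*} [∀ i, NormedAddCommGroup (E i)]
    (hp : 0 < p.toReal) {x y : lp E p} (hle : ∀ i, ‖x i‖ ≤ ‖y i‖) (hlt : ∃ i, ‖x i‖ < ‖y i‖) :
    ‖x‖ < ‖y‖ := by
  obtain ⟨i, hi⟩ := hlt
  have hsum : ∑' i, ‖x i‖ ^ p.toReal < ∑' i, ‖y i‖ ^ p.toReal :=
    Summable.tsum_lt_tsum (fun j => Real.rpow_le_rpow (norm_nonneg _) (hle j) hp.le)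
      (Real.rpow_lt_rpow (norm_nonneg _) hi hp) (lp.hasSum_norm hp x).summable
      (lp.hasSum_norm hp y).summable
  rw [← lp.norm_rpow_eq_tsum hp, ← lp.norm_rpow_eq_tsum hp] at hsum
  exact (Real.rpow_lt_rpow_iff (lp.norm_nonneg' x) (lp.norm_nonneg' y) hp).mp hsum

theorem inf_eq_zero_of_norm_sub_eq_norm_add (hp : 0 < p.toReal) {x y : lp (fun _ : ι => ℝ) p}
    (hx : ∀ i, 0 ≤ x i) (hy : ∀ i, 0 ≤ y i) (hxy : ‖x - y‖ = ‖x + y‖) (i : ι) :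
    x i ⊓ y i = 0 := by
  by_contra hne
  have hpos : 0 < x i ⊓ y i := (le_inf (hx i) (hy i)).lt_of_ne' hne
  have hsub : ∀ j, ‖(x - y) j‖ = |x j - y j| := fun j => by
    rw [lp.coeFn_sub, Pi.sub_apply, Real.norm_eq_abs]
  have hadd : ∀ j, ‖(x + y) j‖ = x j + y j := fun j => by
    rw [lp.coeFn_add, Pi.add_apply, Real.norm_of_nonneg (add_nonneg (hx j) (hy j))]
  refine hxy.not_lt (norm_lt_norm_of_forall_le_of_exists_lt hp (fun j => ?_) ⟨i, ?_⟩)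
  · rw [hsub, hadd, abs_sub_le_iff]
    constructor <;> linarith [hx j, hy j]
  · rw [hsub, hadd, abs_sub_lt_iff]
    constructor <;> linarith [lt_inf_iff.mp hpos]

end lp

theorem positive_isometry_Lp_to_lp_preserves_disjointness_general
    (p : ℝ≥0∞) (hp1 : 1 < p) (hp2 : p ≠ ⊤)
    {Ω : Type*} [MeasurableSpace Ω] (μ : Measure Ω)
    (V : Lp ℝ p μ →ₗ[ℝ] lp (fun _ : ℕ => ℝ) p)
    (hV_isom : ∀ f, ‖V f‖ = ‖f‖)
    (hV_pos : ∀ f, 0 ≤ f → ∀ n, 0 ≤ V f n)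
    (f g : Lp ℝ p μ) (hfg : f ⊓ g = 0) :
    ∀ n, (V f n) ⊓ (V g n) = 0 := by
  have : Fact (1 ≤ p) := ⟨hp1.le⟩
  have hp : 0 < p.toReal := ENNReal.toReal_pos (zero_lt_one.trans hp1).ne' hp2
  have hf : 0 ≤ f := hfg ▸ inf_le_left
  have hg : 0 ≤ g := hfg ▸ inf_le_right
  refine lp.inf_eq_zero_of_norm_sub_eq_norm_add hp (hV_pos f hf) (hV_pos g hg) ?_
  rw [← map_sub, ← map_add, hV_isom, hV_isom, norm_sub_eq_norm_add_of_inf_eq_zero hfg]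

/-- For `1 < p < ∞`, a positive linear isometry `V : Lᵖ(μ; ℝ) → ℓᵖ` preserves disjointness of
positive elements: if `f, g ≥ 0` and `f ⊓ g = 0`, then `(V f) ⊓ (V g) = 0` (coordinatewise). -/
theorem positive_isometry_Lp_to_lp_preserves_disjointness
    (p : ℝ≥0∞) (hp1 : 1 < p) (hp2 : p ≠ ⊤)
    {Ω : Type*} [MeasurableSpace Ω] (μ : Measure Ω)
    (V : Lp ℝ p μ →ₗ[ℝ] lp (fun _ : ℕ => ℝ) p)
    (hV_isom : ∀ f, ‖V f‖ = ‖f‖)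
    (hV_pos : ∀ f, 0 ≤ f → ∀ n, 0 ≤ V f n)
    (f g : Lp ℝ p μ) (hf : 0 ≤ f) (hg : 0 ≤ g) (hfg : f ⊓ g = 0) :
    ∀ n, (V f n) ⊓ (V g n) = 0 :=
  positive_isometry_Lp_to_lp_preserves_disjointness_general p hp1 hp2 μ V hV_isom hV_pos f g hfg
end

section
/- Let C be a positive central bounded linear operator on ℓ² whose kernel is infinite-dimensional. Then C is a self-commutator of a positive operator: there exists a positive bounded linear operator A on ℓ² such that C = A*A − AA*. -/
/-!
A central operator is diagonal, `C eₙ = cₙ eₙ` with `0 ≤ cₙ ≤ l`, and an infinite-dimensional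
kernel forces `cₙ = 0` for infinitely many `n`. An embedding `ℕ × ℕ ↪ {n | cₙ = 0}` splits `ℕ`
into infinite chains `n, σ n, σ² n, …` along an injection `σ` whose range consists of zeros of
`c`, with a base map `β` constant along chains and satisfying `c (β n) = c n` at chain heads.
For the weighted shift `A eₙ = wₙ e_{σ n}`, `wₙ = √(c (β n))`, the identity `w ∘ σ = w` makes
`A*A - AA*` diagonal with entry `wₙ²` at chain heads and `0` on the range of `σ`, which is `c`.
-/

open ContinuousLinearMap
open scoped lp ENNReal

lemma Function.comp_extend_zero {α β M N : Type*} [Zero M] [Zero N] (F : M → N) (hF : F 0 = 0)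
    (f : α → β) (g : α → M) : F ∘ Function.extend f g 0 = Function.extend f (F ∘ g) 0 := by
  funext b
  rw [Function.comp_apply, Function.apply_extend F]
  congr 1
  funext b
  exact hF

lemma tsum_sq_extend_zero {ι κ : Type*} (σ : ι ↪ κ) (x : ι → ℝ) :
    ∑' k, Function.extend σ x 0 k ^ 2 = ∑' i, x i ^ 2 := by
  rw [← tsum_extend_zero σ.injective]
  exact congrArg tsum (Function.comp_extend_zero (· ^ 2) (zero_pow two_ne_zero) σ x)

namespace lp

variable {ι κ : Type*}

lemma norm_sq_eq_tsum (x : ℓ²(ι, ℝ)) : ‖x‖ ^ 2 = ∑' i, x i ^ 2 := by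
  simpa using norm_rpow_eq_tsum (p := 2) (by norm_num) x

lemma memℓp_extend_zero (σ : ι ↪ κ) (x : ℓ²(ι, ℝ)) : Memℓp (Function.extend σ x 0) 2 := by
  have hx := (memℓp_gen_iff (p := 2) (by norm_num)).1 x.2
  refine memℓp_gen ?_
  rw [← Function.comp_def (fun t : ℝ => ‖t‖ ^ (2 : ℝ≥0∞).toReal),
    Function.comp_extend_zero _ (by simp)]
  exact (summable_extend_zero σ.injective).2 hx

noncomputable def extendZero (σ : ι ↪ κ) : ℓ²(ι, ℝ) →L[ℝ] ℓ²(κ, ℝ) :=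
  LinearMap.mkContinuous
    { toFun x := ⟨Function.extend σ x 0, memℓp_extend_zero σ x⟩
      map_add' x y := Subtype.ext (map_add (Function.ExtendByZero.linearMap ℝ σ) (x : ι → ℝ) y)
      map_smul' c x :=
        Subtype.ext (map_smul (Function.ExtendByZero.linearMap ℝ σ) c (x : ι → ℝ)) }
    1
    fun x => by
      refine le_of_eq ?_
      rw [one_mul, ← sq_eq_sq₀ (norm_nonneg _) (norm_nonneg _), norm_sq_eq_tsum, norm_sq_eq_tsum]
      exact tsum_sq_extend_zero σ x

lemma extendZero_apply (σ : ι ↪ κ) (x : ℓ²(ι, ℝ)) :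
    ⇑(extendZero σ x) = Function.extend σ x 0 := by
  rfl

lemma extendZero_single [DecidableEq ι] [DecidableEq κ] (σ : ι ↪ κ) (i : ι) (a : ℝ) :
    extendZero σ (lp.single 2 i a) = lp.single 2 (σ i) a := by
  ext k
  rw [extendZero_apply, lp.coeFn_single, lp.coeFn_single]
  by_cases hk : ∃ j, σ j = k
  · obtain ⟨j, rfl⟩ := hk
    rw [σ.injective.extend_apply]
    simp [Pi.single_apply, σ.injective.eq_iff]
  · rw [Function.extend_apply' _ _ _ hk, Pi.single_eq_of_ne (fun h => hk ⟨i, h.symm⟩)]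
    rfl

lemma adjoint_apply_eq_inner_single [DecidableEq ι] (T : ℓ²(ι, ℝ) →L[ℝ] ℓ²(κ, ℝ))
    (y : ℓ²(κ, ℝ)) (i : ι) : adjoint T y i = inner ℝ (T (lp.single 2 i 1)) y := by
  rw [← adjoint_inner_right, inner_single_left]
  simp

lemma adjoint_extendZero_apply (σ : ι ↪ κ) (y : ℓ²(κ, ℝ)) (i : ι) :
    adjoint (extendZero σ) y i = y (σ i) := by
  classical
  rw [adjoint_apply_eq_inner_single, extendZero_single, inner_single_left]
  simp

lemma adjoint_extendZero_comp_extendZero (σ : ι ↪ κ) :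
    adjoint (extendZero σ) ∘L extendZero σ = ContinuousLinearMap.id ℝ ℓ²(ι, ℝ) := by
  ext x i
  rw [comp_apply, adjoint_extendZero_apply, extendZero_apply, σ.injective.extend_apply]
  rfl

noncomputable def mulCLM (w : ℓ^∞(ι, ℝ)) : ℓ²(ι, ℝ) →L[ℝ] ℓ²(ι, ℝ) :=
  mapCLM 2 (fun i => ContinuousLinearMap.mul ℝ ℝ (w i)) (norm_nonneg w)
    fun i => (opNorm_mul_apply_le ℝ ℝ (w i)).trans (norm_apply_le_norm ENNReal.top_ne_zero w i)

lemma mulCLM_apply (w : ℓ^∞(ι, ℝ)) (x : ℓ²(ι, ℝ)) (i : ι) : mulCLM w x i = w i * x i := by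
  simp [mulCLM]

lemma adjoint_mulCLM (w : ℓ^∞(ι, ℝ)) : adjoint (mulCLM w) = mulCLM w := by
  refine ((eq_adjoint_iff _ _).2 fun x y => ?_).symm
  simp only [inner_eq_tsum, mulCLM_apply, RCLike.inner_apply, conj_trivial]
  congr 1
  funext i
  ring

noncomputable def weightedShift (σ : ι ↪ κ) (w : ℓ^∞(ι, ℝ)) : ℓ²(ι, ℝ) →L[ℝ] ℓ²(κ, ℝ) :=
  extendZero σ ∘L mulCLM w

lemma weightedShift_apply (σ : ι ↪ κ) (w : ℓ^∞(ι, ℝ)) (x : ℓ²(ι, ℝ)) :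
    ⇑(weightedShift σ w x) = Function.extend σ (fun i => w i * x i) 0 := by
  rw [weightedShift, comp_apply, extendZero_apply]
  exact congrArg (Function.extend σ · (0 : κ → ℝ)) (funext (mulCLM_apply w x))

lemma weightedShift_nonneg (σ : ι ↪ κ) {w : ℓ^∞(ι, ℝ)} (hw : ∀ i, 0 ≤ w i)
    {x : ℓ²(ι, ℝ)} (hx : ∀ i, 0 ≤ x i) (k : κ) : 0 ≤ weightedShift σ w x k := by
  rw [weightedShift_apply]
  by_cases hk : ∃ i, σ i = k
  · obtain ⟨i, rfl⟩ := hk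
    rw [σ.injective.extend_apply]
    exact mul_nonneg (hw i) (hx i)
  · rw [Function.extend_apply' _ _ _ hk]
    rfl

lemma adjoint_weightedShift (σ : ι ↪ κ) (w : ℓ^∞(ι, ℝ)) :
    adjoint (weightedShift σ w) = mulCLM w ∘L adjoint (extendZero σ) := by
  rw [weightedShift, adjoint_comp, adjoint_mulCLM]

lemma adjoint_weightedShift_comp_weightedShift_apply (σ : ι ↪ κ) (w : ℓ^∞(ι, ℝ))
    (x : ℓ²(ι, ℝ)) (i : ι) :
    (adjoint (weightedShift σ w) ∘L weightedShift σ w) x i = w i ^ 2 * x i := by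
  rw [adjoint_weightedShift, weightedShift, comp_assoc, ← comp_assoc _ (extendZero σ),
    adjoint_extendZero_comp_extendZero, id_comp, comp_apply, mulCLM_apply, mulCLM_apply,
    ← mul_assoc, sq]

lemma weightedShift_comp_adjoint_weightedShift_apply (σ : ι ↪ κ) (w : ℓ^∞(ι, ℝ))
    (y : ℓ²(κ, ℝ)) (k : κ) :
    (weightedShift σ w ∘L adjoint (weightedShift σ w)) y k
      = Function.extend σ (fun i => w i ^ 2 * y (σ i)) 0 k := by
  rw [comp_apply, weightedShift_apply, adjoint_weightedShift]
  congr 2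
  funext i
  rw [comp_apply, mulCLM_apply, adjoint_extendZero_apply]
  ring

lemma selfCommutator_weightedShift_apply (σ : ι ↪ ι) {w : ℓ^∞(ι, ℝ)}
    (hw : ∀ i, w (σ i) = w i) (x : ℓ²(ι, ℝ)) (i : ι) :
    (adjoint (weightedShift σ w) ∘L weightedShift σ w
      - weightedShift σ w ∘L adjoint (weightedShift σ w)) x i
      = (Set.range σ)ᶜ.indicator (fun j => w j ^ 2 * x j) i := by
  rw [sub_apply, coeFn_sub, Pi.sub_apply, adjoint_weightedShift_comp_weightedShift_apply,
    weightedShift_comp_adjoint_weightedShift_apply]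
  by_cases hi : i ∈ Set.range σ
  · obtain ⟨j, rfl⟩ := hi
    rw [σ.injective.extend_apply, hw, sub_self, Set.indicator_of_notMem (by simp)]
  · rw [Function.extend_apply' _ _ _ hi, Set.indicator_of_mem hi]
    simp

lemma apply_eq_mul_of_abs_apply_le [DecidableEq ι] (C : ℓ²(ι, ℝ) →L[ℝ] ℓ²(ι, ℝ)) {l : ℝ}
    (hC : ∀ x i, |C x i| ≤ l * |x i|) (x : ℓ²(ι, ℝ)) (i : ι) :
    C x i = C (lp.single 2 i 1) i * x i := by
  set y : ℓ²(ι, ℝ) := x - x i • lp.single 2 i 1 with hy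
  have hyi : y i = 0 := by
    rw [hy, coeFn_sub, Pi.sub_apply, coeFn_smul, Pi.smul_apply, lp.single_apply_self, smul_eq_mul,
      mul_one, sub_self]
  have hCy : C y i = 0 := abs_nonpos_iff.1 (by simpa [hyi] using hC y i)
  have hx : x = y + x i • lp.single 2 i 1 := by rw [hy, sub_add_cancel]
  rw [hx, map_add, map_smul, coeFn_add, Pi.add_apply, hCy, zero_add, coeFn_smul, Pi.smul_apply,
    smul_eq_mul, mul_comm, ← hx]

lemma infinite_setOf_eq_zero_of_not_finiteDimensional_ker {C : ℓ²(ι, ℝ) →L[ℝ] ℓ²(ι, ℝ)}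
    {c : ι → ℝ} (hC : ∀ x i, C x i = c i * x i)
    (hker : ¬ FiniteDimensional ℝ (LinearMap.ker (C : ℓ²(ι, ℝ) →ₗ[ℝ] ℓ²(ι, ℝ)))) :
    {i | c i = 0}.Infinite := by
  contrapose! hker
  have := hker.to_subtype
  refine Module.Finite.of_injective
    (LinearMap.pi (fun i : {i | c i = 0} => lp.evalₗ (𝕜 := ℝ) (fun _ : ι => ℝ) 2 i) ∘ₗ
      (LinearMap.ker _).subtype) ?_
  intro x y hxy
  ext i
  by_cases hi : c i = 0
  · exact congrFun hxy ⟨i, hi⟩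
  · have hzero : ∀ v ∈ LinearMap.ker (C : ℓ²(ι, ℝ) →ₗ[ℝ] ℓ²(ι, ℝ)), v i = 0 := fun v hv => by
      simpa [hi, hC] using congrFun (congrArg (⇑) (LinearMap.mem_ker.1 hv)) i
    rw [hzero x x.2, hzero y y.2]

end lp

section Chains

variable {α : Type*} (z : α × ℕ ↪ α)

/- The chain through `a` is `a, z (a, 0), z (a, 1), …`, with base `a`; when `a` is itself some
`z p`, it already lies on another chain, and its own chain starts at `z (a, 0)` instead. -/
noncomputable def chainSucc : α → α :=
  Function.extend z (fun p => z (p.1, p.2 + 1)) (fun a => z (a, 0))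

noncomputable def chainBase : α → α :=
  Function.extend z Prod.fst id

variable {z}

lemma chainSucc_apply_embedding (p : α × ℕ) : chainSucc z (z p) = z (p.1, p.2 + 1) :=
  z.injective.extend_apply _ _ p

lemma chainSucc_of_notMem_range {a : α} (ha : a ∉ Set.range z) : chainSucc z a = z (a, 0) :=
  Function.extend_apply' _ _ a ha

lemma chainBase_apply_embedding (p : α × ℕ) : chainBase z (z p) = p.1 :=
  z.injective.extend_apply _ _ p

lemma chainBase_of_notMem_range {a : α} (ha : a ∉ Set.range z) : chainBase z a = a :=
  Function.extend_apply' _ _ a ha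

variable (z)

lemma chainSucc_mem_range (a : α) : chainSucc z a ∈ Set.range z := by
  by_cases ha : a ∈ Set.range z
  · obtain ⟨p, rfl⟩ := ha
    exact ⟨_, (chainSucc_apply_embedding p).symm⟩
  · exact ⟨_, (chainSucc_of_notMem_range ha).symm⟩

lemma chainSucc_injective : Function.Injective (chainSucc z) := by
  intro a b hab
  by_cases ha : a ∈ Set.range z <;> by_cases hb : b ∈ Set.range z
  · obtain ⟨⟨a, i⟩, rfl⟩ := ha
    obtain ⟨⟨b, j⟩, rfl⟩ := hb
    rw [chainSucc_apply_embedding, chainSucc_apply_embedding] at hab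
    simp_all
  · obtain ⟨⟨a, i⟩, rfl⟩ := ha
    rw [chainSucc_apply_embedding, chainSucc_of_notMem_range hb] at hab
    simp at hab
  · obtain ⟨⟨b, j⟩, rfl⟩ := hb
    rw [chainSucc_apply_embedding, chainSucc_of_notMem_range ha] at hab
    simp at hab
  · rw [chainSucc_of_notMem_range ha, chainSucc_of_notMem_range hb] at hab
    simpa using hab

lemma chainBase_chainSucc (a : α) : chainBase z (chainSucc z a) = chainBase z a := by
  by_cases ha : a ∈ Set.range z
  · obtain ⟨p, rfl⟩ := ha
    rw [chainSucc_apply_embedding, chainBase_apply_embedding, chainBase_apply_embedding]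
  · rw [chainSucc_of_notMem_range ha, chainBase_apply_embedding, chainBase_of_notMem_range ha]

lemma chainBase_of_notMem_range_chainSucc {a : α} (ha : a ∉ Set.range (chainSucc z)) :
    chainBase z a = a ∨ a ∈ Set.range z ∧ chainBase z a ∈ Set.range z := by
  by_cases hz : a ∈ Set.range z
  · obtain ⟨⟨b, k⟩, rfl⟩ := hz
    refine .inr ⟨⟨_, rfl⟩, ?_⟩
    rw [chainBase_apply_embedding]
    cases k with
    | zero =>
      by_contra hb
      exact ha ⟨b, chainSucc_of_notMem_range hb⟩
    | succ k => exact absurd ⟨z (b, k), chainSucc_apply_embedding (b, k)⟩ ha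
  · exact .inl (chainBase_of_notMem_range hz)

end Chains

theorem exists_embedding_of_infinite_setOf_eq_zero {α M : Type*} [Countable α] [Zero M]
    {f : α → M} (hf : {a | f a = 0}.Infinite) :
    ∃ (σ : α ↪ α) (β : α → α), (∀ a, f (σ a) = 0) ∧ (∀ a, β (σ a) = β a) ∧
      ∀ a ∉ Set.range σ, f (β a) = f a := by
  obtain ⟨e, he⟩ := Countable.exists_injective_nat (α × ℕ)
  let z : α × ℕ ↪ α := (⟨e, he⟩ : α × ℕ ↪ ℕ).trans (hf.natEmbedding.trans (.subtype _))
  have hz : ∀ p, f (z p) = 0 := fun p => (hf.natEmbedding _ (e p)).2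
  refine ⟨⟨chainSucc z, chainSucc_injective z⟩, chainBase z, fun a => ?_,
    chainBase_chainSucc z, fun a ha => ?_⟩
  · obtain ⟨p, hp⟩ := chainSucc_mem_range z a
    exact (congrArg f hp).symm.trans (hz p)
  · rcases chainBase_of_notMem_range_chainSucc z ha with h | ⟨⟨p, rfl⟩, q, hq⟩
    · rw [h]
    · rw [← hq, hz, hz]

/-- Every positive central operator on `ℓ²` with infinite-dimensional kernel is a self-commutator
of a positive operator. -/
theorem positive_central_infinite_kernel_is_selfCommutator_l2
    (C : lp (fun _ : ℕ => ℝ) 2 →L[ℝ] lp (fun _ : ℕ => ℝ) 2)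
    (hC_pos : ∀ x : lp (fun _ : ℕ => ℝ) 2, (∀ n, 0 ≤ x n) → ∀ n, 0 ≤ C x n)
    (hC_central : ∃ l : ℝ, 0 ≤ l ∧ ∀ (x : lp (fun _ : ℕ => ℝ) 2) (n : ℕ), |C x n| ≤ l * |x n|)
    (hC_ker : ¬ FiniteDimensional ℝ (LinearMap.ker (C : lp (fun _ : ℕ => ℝ) 2 →ₗ[ℝ] lp (fun _ : ℕ => ℝ) 2))) :
    ∃ A : lp (fun _ : ℕ => ℝ) 2 →L[ℝ] lp (fun _ : ℕ => ℝ) 2,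
      (∀ x : lp (fun _ : ℕ => ℝ) 2, (∀ n, 0 ≤ x n) → ∀ n, 0 ≤ A x n) ∧
      C = adjoint A ∘L A - A ∘L adjoint A := by
  obtain ⟨l, -, hl⟩ := hC_central
  set c : ℕ → ℝ := fun n => C (lp.single 2 n 1) n
  have hdiag : ∀ x n, C x n = c n * x n := lp.apply_eq_mul_of_abs_apply_le C hl
  have hc_nonneg : ∀ n, 0 ≤ c n := fun n => hC_pos (lp.single 2 n 1) (fun j => by
    rw [lp.single_apply, Pi.single_apply]; split_ifs <;> norm_num) n
  have hc_le : ∀ n, c n ≤ l := fun n =>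
    (le_abs_self _).trans (by simpa using hl (lp.single 2 n 1) n)
  obtain ⟨σ, β, hσ, hβ, hβc⟩ := exists_embedding_of_infinite_setOf_eq_zero
    (lp.infinite_setOf_eq_zero_of_not_finiteDimensional_ker hdiag hC_ker)
  let w : ℓ^∞(ℕ, ℝ) := ⟨fun n => √(c (β n)), memℓp_infty ⟨√l, by
    rintro _ ⟨n, rfl⟩
    exact (Real.norm_of_nonneg (Real.sqrt_nonneg _)).trans_le (Real.sqrt_le_sqrt (hc_le (β n)))⟩⟩
  refine ⟨lp.weightedShift σ w,
    fun x hx => lp.weightedShift_nonneg σ (fun _ => Real.sqrt_nonneg _) hx, ?_⟩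
  ext x n
  rw [lp.selfCommutator_weightedShift_apply σ (fun n => congrArg (fun m => √(c m)) (hβ n)) x n,
    hdiag]
  by_cases hn : n ∈ Set.range σ
  · obtain ⟨k, rfl⟩ := hn
    simp [hσ k]
  · rw [Set.indicator_of_mem hn, Real.sq_sqrt (hc_nonneg _), hβc n hn]
end

section
/- Let C be a positive central bounded linear operator on L²[0,1] whose kernel is infinite-dimensional. Then C is a self-commutator of a positive operator: there exists a positive bounded linear operator A on L²[0,1] such that C = A*A − AA*. -/
/-!
A positive central operator on `L²` is multiplication `M_g` by a bounded measurable `g ≥ 0`, and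
its kernel is infinite-dimensional exactly when `Z = {g = 0}` has positive measure `m`. The
distribution function of Lebesgue measure restricted to `Z` gives a map `φ` with
`φ_*(1_Z dx) = m dx` that is injective on almost all of `Z`, so `V f = m^{-1/2} 1_Z (f ∘ φ)` is an
isometry with `V V* = M_{1_Z}`. Let `h x` be the value of `g` at the first point of the orbit
`x, φ x, φ² x, …` outside `Z`; then `h = g + 1_Z (h ∘ φ)`. For the positive operator
`A = V M_{√h}` this gives `A* A = M_h` and `A A* = V M_h V* = M_{1_Z (h ∘ φ)}`, hence
`A* A - A A* = M_g`.
-/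

open MeasureTheory ContinuousLinearMap Set Function Filter
open scoped ENNReal NNReal

noncomputable section

section Adjoint

variable {𝕜 H K : Type*} [RCLike 𝕜] [NormedAddCommGroup H] [InnerProductSpace 𝕜 H]
  [CompleteSpace H] [NormedAddCommGroup K] [InnerProductSpace 𝕜 K] [CompleteSpace K]

lemma ContinuousLinearMap.comp_adjoint_eq_of_comp_eq {V : H →L[𝕜] K} {W : K →L[𝕜] H}
    {Q : K →L[𝕜] K} (hV : adjoint V ∘L V = 1) (hVW : V ∘L W = Q) (hQV : Q ∘L V = V)
    (hQ : IsSelfAdjoint Q) : V ∘L adjoint V = Q := by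
  have hVQ : adjoint V ∘L Q = adjoint V := by rw [← hQ.adjoint_eq, ← adjoint_comp, hQV]
  rw [← hVQ, ← hVW, ← comp_assoc (adjoint V), hV, one_def, id_comp]

lemma ContinuousLinearMap.adjoint_comp_self_sub_self_comp_adjoint_comp {V S : H →L[𝕜] H}
    (hV : adjoint V ∘L V = 1) (hS : IsSelfAdjoint S) :
    adjoint (V ∘L S) ∘L (V ∘L S) - (V ∘L S) ∘L adjoint (V ∘L S)
      = S ∘L S - V ∘L (S ∘L S) ∘L adjoint V := by
  rw [adjoint_comp, hS.adjoint_eq, comp_assoc, ← comp_assoc (adjoint V), hV, one_def, id_comp]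
  simp only [comp_assoc]

end Adjoint

section WeightedComposition

variable {α : Type*} [MeasurableSpace α] {μ : Measure α}

/-- Conditions under which the weighted composition `f ↦ k · (f ∘ θ)` is a bounded operator
on `L²(μ)`. -/
structure BoundedWeightedComp (μ : Measure α) (k : α → ℝ) (θ : α → α) : Prop where
  measurable_weight : Measurable k
  measurable_map : Measurable θ
  exists_abs_weight_le : ∃ b, ∀ x, |k x| ≤ b
  exists_map_restrict_le : ∃ c : ℝ≥0, (μ.restrict (support k)).map θ ≤ (c : ℝ≥0∞) • μ

namespace BoundedWeightedComp

variable {k k₁ k₂ k₃ a : α → ℝ} {θ θ₁ θ₂ θ₃ : α → α}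

lemma of_support_subset {Z : Set α} {c : ℝ≥0} (hk : Measurable k) (hkb : ∃ b, ∀ x, |k x| ≤ b)
    (hθ : Measurable θ) (hkZ : support k ⊆ Z) (hθZ : (μ.restrict Z).map θ ≤ (c : ℝ≥0∞) • μ) :
    BoundedWeightedComp μ k θ :=
  ⟨hk, hθ, hkb, c, (Measure.map_mono (Measure.restrict_mono hkZ le_rfl) hθ).trans hθZ⟩

lemma of_map_id (hk : Measurable k) (hkb : ∃ b, ∀ x, |k x| ≤ b) : BoundedWeightedComp μ k id :=
  of_support_subset (c := 1) hk hkb measurable_id (subset_univ _) (by simp)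

lemma mul_left (h : BoundedWeightedComp μ k θ) (ha : BoundedWeightedComp μ a id) :
    BoundedWeightedComp μ (fun x ↦ a x * k x) θ := by
  obtain ⟨b, hb⟩ := h.exists_abs_weight_le
  obtain ⟨b', hb'⟩ := ha.exists_abs_weight_le
  obtain ⟨c, hc⟩ := h.exists_map_restrict_le
  refine of_support_subset (ha.measurable_weight.mul h.measurable_weight)
    ⟨b' * b, fun x ↦ ?_⟩ h.measurable_map (fun x hx ↦ right_ne_zero_of_mul hx) hc
  rw [abs_mul]
  exact mul_le_mul (hb' x) (hb x) (abs_nonneg _) ((abs_nonneg _).trans (hb' x))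

lemma ae_comp_of_weight_ne_zero (h : BoundedWeightedComp μ k θ) {p : α → Prop}
    (hp : ∀ᵐ y ∂μ, p y) : ∀ᵐ x ∂μ, k x ≠ 0 → p (θ x) :=
  have hθ : Measure.QuasiMeasurePreserving θ (μ.restrict (support k)) μ :=
    ⟨h.measurable_map, Measure.absolutelyContinuous_of_le_smul
      h.exists_map_restrict_le.choose_spec⟩
  (ae_restrict_iff' (measurableSet_support h.measurable_weight)).1 (hθ.ae hp)

lemma weight_mul_comp_congr (h : BoundedWeightedComp μ k θ) {f f' : α → ℝ} (hf : f =ᵐ[μ] f') :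
    (fun x ↦ k x * f (θ x)) =ᵐ[μ] fun x ↦ k x * f' (θ x) := by
  filter_upwards [h.ae_comp_of_weight_ne_zero hf] with x hx
  by_cases hk : k x = 0
  · simp [hk]
  · rw [hx hk]

lemma exists_eLpNorm_weight_mul_comp_le (h : BoundedWeightedComp μ k θ) :
    ∃ C : ℝ≥0, ∀ f : Lp ℝ 2 μ, eLpNorm (fun x ↦ k x * f (θ x)) 2 μ ≤ C * eLpNorm f 2 μ := by
  obtain ⟨b, hb⟩ := h.exists_abs_weight_le
  obtain ⟨c, hc⟩ := h.exists_map_restrict_le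
  refine ⟨b.toNNReal * c ^ (2⁻¹ : ℝ), fun f ↦ ?_⟩
  have hpoint : ∀ x, ‖k x * f (θ x)‖₊ ≤ b.toNNReal * ‖(f ∘ θ) x‖₊ := fun x ↦ by
    rw [nnnorm_mul, comp_apply]
    gcongr
    rw [← NNReal.coe_le_coe, coe_nnnorm, Real.norm_eq_abs]
    exact (hb x).trans (Real.le_coe_toNNReal b)
  calc eLpNorm (fun x ↦ k x * f (θ x)) 2 μ
      = eLpNorm (fun x ↦ k x * f (θ x)) 2 (μ.restrict (support k)) :=
        (eLpNorm_restrict_eq_of_support_subset fun x hx ↦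
          left_ne_zero_of_mul (mem_support.1 hx)).symm
    _ ≤ b.toNNReal • eLpNorm (f ∘ θ) 2 (μ.restrict (support k)) :=
        eLpNorm_le_nnreal_smul_eLpNorm_of_ae_le_mul (ae_of_all _ hpoint) 2
    _ = b.toNNReal • eLpNorm f 2 ((μ.restrict (support k)).map θ) := by
        rw [eLpNorm_map_measure (Lp.stronglyMeasurable f).aestronglyMeasurable
          h.measurable_map.aemeasurable]
    _ ≤ b.toNNReal • eLpNorm f 2 ((c : ℝ≥0∞) • μ) := by gcongr
    _ = _ := by
        rw [eLpNorm_smul_measure_of_ne_top ENNReal.ofNat_ne_top]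
        simp [ENNReal.smul_def, ← mul_assoc, ENNReal.coe_rpow_of_nonneg]

lemma memLp (h : BoundedWeightedComp μ k θ) (f : Lp ℝ 2 μ) :
    MemLp (fun x ↦ k x * f (θ x)) 2 μ := by
  obtain ⟨C, hC⟩ := h.exists_eLpNorm_weight_mul_comp_le
  exact ⟨(h.measurable_weight.mul ((Lp.stronglyMeasurable f).measurable.comp
    h.measurable_map)).aestronglyMeasurable,
    (hC f).trans_lt (ENNReal.mul_lt_top ENNReal.coe_lt_top (Lp.eLpNorm_lt_top f))⟩

def toCLM (h : BoundedWeightedComp μ k θ) : Lp ℝ 2 μ →L[ℝ] Lp ℝ 2 μ :=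
  LinearMap.mkContinuousOfExistsBound
    { toFun f := (h.memLp f).toLp _
      map_add' f g := by
        rw [← MemLp.toLp_add]
        refine MemLp.toLp_congr _ _ ((h.weight_mul_comp_congr (Lp.coeFn_add f g)).trans ?_)
        exact ae_of_all _ fun x ↦ by simp [mul_add]
      map_smul' r f := by
        rw [RingHom.id_apply, ← MemLp.toLp_const_smul]
        refine MemLp.toLp_congr _ _ ((h.weight_mul_comp_congr (Lp.coeFn_smul r f)).trans ?_)
        exact ae_of_all _ fun x ↦ by simp only [Pi.smul_apply, smul_eq_mul]; ring }
    (by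
      obtain ⟨C, hC⟩ := h.exists_eLpNorm_weight_mul_comp_le
      refine ⟨C, fun f ↦ ?_⟩
      change ‖(h.memLp f).toLp _‖ ≤ _
      rw [Lp.norm_toLp, Lp.norm_def, ← ENNReal.coe_toReal C, ← ENNReal.toReal_mul]
      exact ENNReal.toReal_mono (by finiteness) (hC f))

lemma coeFn_toCLM (h : BoundedWeightedComp μ k θ) (f : Lp ℝ 2 μ) :
    h.toCLM f =ᵐ[μ] fun x ↦ k x * f (θ x) :=
  MemLp.coeFn_toLp (h.memLp f)

lemma toCLM_nonneg (h : BoundedWeightedComp μ k θ) (hk : 0 ≤ k) {f : Lp ℝ 2 μ} (hf : 0 ≤ f) :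
    0 ≤ h.toCLM f := by
  rw [← Lp.coeFn_nonneg]
  filter_upwards [h.coeFn_toCLM f, h.ae_comp_of_weight_ne_zero ((Lp.coeFn_nonneg f).2 hf)]
    with x hx hfx
  rw [hx]
  by_cases hkx : k x = 0
  · simp [hkx]
  · exact mul_nonneg (hk x) (hfx hkx)

lemma toCLM_comp_toCLM (h₁ : BoundedWeightedComp μ k₁ θ₁) (h₂ : BoundedWeightedComp μ k₂ θ₂)
    (h₃ : BoundedWeightedComp μ k₃ θ₃) (hk : ∀ x, k₃ x = k₁ x * k₂ (θ₁ x))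
    (hθ : ∀ᵐ x ∂μ, k₃ x ≠ 0 → θ₃ x = θ₂ (θ₁ x)) :
    h₁.toCLM ∘L h₂.toCLM = h₃.toCLM := by
  ext1 f
  refine Lp.ext ?_
  filter_upwards [h₁.coeFn_toCLM (h₂.toCLM f), h₁.ae_comp_of_weight_ne_zero (h₂.coeFn_toCLM f),
    h₃.coeFn_toCLM f, hθ] with x h₁x h₂x h₃x hθx
  rw [ContinuousLinearMap.comp_apply, h₁x, h₃x]
  by_cases hk₃ : k₃ x = 0
  · rw [hk₃, zero_mul]
    by_cases hk₁ : k₁ x = 0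
    · rw [hk₁, zero_mul]
    · rw [h₂x hk₁, ← mul_assoc, ← hk, hk₃, zero_mul]
  · have hk₁ : k₁ x ≠ 0 := left_ne_zero_of_mul (hk x ▸ hk₃)
    rw [h₂x hk₁, hθx hk₃, hk, mul_assoc]

lemma toCLM_comp_toCLM_of_map_id (h : BoundedWeightedComp μ k θ)
    (ha : BoundedWeightedComp μ a id) (haθ : BoundedWeightedComp μ (a ∘ θ) id) :
    h.toCLM ∘L ha.toCLM = haθ.toCLM ∘L h.toCLM :=
  (h.toCLM_comp_toCLM ha (h.mul_left haθ) (fun _ ↦ mul_comm _ _)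
    (ae_of_all _ fun _ _ ↦ rfl)).trans
  (haθ.toCLM_comp_toCLM h (h.mul_left haθ) (fun _ ↦ rfl) (ae_of_all _ fun _ _ ↦ rfl)).symm

lemma toCLM_sub_toCLM (h₁ : BoundedWeightedComp μ k₁ θ) (h₂ : BoundedWeightedComp μ k₂ θ)
    (h₃ : BoundedWeightedComp μ k₃ θ) (hk : ∀ x, k₃ x = k₁ x - k₂ x) :
    h₁.toCLM - h₂.toCLM = h₃.toCLM := by
  ext1 f
  refine Lp.ext ?_
  filter_upwards [Lp.coeFn_sub (h₁.toCLM f) (h₂.toCLM f), h₁.coeFn_toCLM f, h₂.coeFn_toCLM f,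
    h₃.coeFn_toCLM f] with x hx h₁x h₂x h₃x
  rw [sub_apply, hx, Pi.sub_apply, h₁x, h₂x, h₃x, hk, sub_mul]

lemma isSelfAdjoint_toCLM (h : BoundedWeightedComp μ k id) : IsSelfAdjoint h.toCLM := by
  refine (isSelfAdjoint_iff_isSymmetric).2 fun f f' ↦ ?_
  simp only [coe_coe, L2.inner_def]
  refine integral_congr_ae ?_
  filter_upwards [h.coeFn_toCLM f, h.coeFn_toCLM f'] with x hx hx'
  simp only [hx, hx', id, RCLike.inner_apply, conj_trivial]
  ring

lemma adjoint_comp_toCLM_eq_one (h : BoundedWeightedComp μ k θ)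
    (hθ : (μ.withDensity fun x ↦ (‖k x‖₊ ^ 2 : ℝ≥0)).map θ = μ) :
    adjoint h.toCLM ∘L h.toCLM = 1 := by
  refine (inner_map_map_iff_adjoint_comp_self _).1 fun f f' ↦ ?_
  simp only [L2.inner_def]
  calc ∫ x, inner ℝ (h.toCLM f x) (h.toCLM f' x) ∂μ
      = ∫ x, (‖k x‖₊ ^ 2 : ℝ≥0) • (f (θ x) * f' (θ x)) ∂μ := by
        refine integral_congr_ae ?_
        filter_upwards [h.coeFn_toCLM f, h.coeFn_toCLM f'] with x hx hx'
        rw [hx, hx', RCLike.inner_apply, conj_trivial, NNReal.smul_def, smul_eq_mul,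
          NNReal.coe_pow, coe_nnnorm, Real.norm_eq_abs, sq_abs]
        ring
    _ = ∫ y, f y * f' y ∂((μ.withDensity fun x ↦ (‖k x‖₊ ^ 2 : ℝ≥0)).map θ) := by
        rw [integral_map h.measurable_map.aemeasurable, integral_withDensity_eq_integral_smul]
        · exact h.measurable_weight.nnnorm.pow_const 2
        · exact ((Lp.stronglyMeasurable f).mul (Lp.stronglyMeasurable f')).aestronglyMeasurable
    _ = ∫ y, inner ℝ (f y) (f' y) ∂μ := by
        simp only [hθ, RCLike.inner_apply, conj_trivial, mul_comm]

lemma ker_toCLM_eq_bot (h : BoundedWeightedComp μ k id) (hk : μ {x | k x = 0} = 0) :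
    LinearMap.ker h.toCLM.toLinearMap = ⊥ := by
  refine (LinearMap.ker_eq_bot').2 fun f hf ↦ Lp.ext ?_
  have hkf : h.toCLM f =ᵐ[μ] 0 := by rw [show h.toCLM f = 0 from hf]; exact Lp.coeFn_zero ..
  filter_upwards [h.coeFn_toCLM f, hkf, Lp.coeFn_zero ℝ 2 μ, measure_eq_zero_iff_ae_notMem.1 hk]
    with x h₁ h₂ h₃ h₄
  rw [h₃]
  exact (mul_eq_zero.1 (h₁.symm.trans h₂)).resolve_left h₄

end BoundedWeightedComp

end WeightedComposition

section Central

variable {α : Type*} [MeasurableSpace α] {μ : Measure α} {C : Lp ℝ 2 μ →L[ℝ] Lp ℝ 2 μ} {l : ℝ}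

lemma ae_apply_eq_zero_of_abs_le_smul_abs (hC : ∀ f, |C f| ≤ l • |f|) (f : Lp ℝ 2 μ) :
    ∀ᵐ x ∂μ, f x = 0 → C f x = 0 := by
  filter_upwards [(Lp.coeFn_le _ _).2 (hC f), Lp.coeFn_abs (C f), Lp.coeFn_smul l |f|,
    Lp.coeFn_abs f] with x hx hCf hlf hf hfx
  rw [hCf, hlf, Pi.smul_apply, hf, hfx, abs_zero, smul_zero] at hx
  exact abs_nonpos_iff.1 hx

variable [IsFiniteMeasure μ]

lemma apply_indicatorConstLp_ae_eq (hC : ∀ f, |C f| ≤ l • |f|) {s : Set α}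
    (hs : MeasurableSet s) (hμs : μ s ≠ ∞) (c : ℝ) :
    C (indicatorConstLp 2 hs hμs c)
      =ᵐ[μ] fun x ↦ C (Lp.const 2 μ (1 : ℝ)) x * s.indicator (fun _ ↦ c) x := by
  set u := indicatorConstLp 2 hs hμs c
  set v := indicatorConstLp 2 hs.compl (measure_ne_top μ sᶜ) c
  have huv : C u + C v = c • C (Lp.const 2 μ (1 : ℝ)) := by
    rw [← map_add, ← map_smul]
    congr 1
    refine Lp.ext ?_
    filter_upwards [Lp.coeFn_add u v, Lp.coeFn_smul c (Lp.const 2 μ (1 : ℝ)),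
      indicatorConstLp_coeFn (p := 2) (hs := hs) (hμs := hμs) (c := c),
      indicatorConstLp_coeFn (p := 2) (hs := hs.compl) (hμs := measure_ne_top μ sᶜ) (c := c),
      Lp.coeFn_const (p := 2) (μ := μ) (1 : ℝ)] with x h₁ h₂ h₃ h₄ h₅
    rw [h₁, h₂, Pi.add_apply, Pi.smul_apply, h₃, h₄, h₅]
    by_cases hx : x ∈ s <;> simp [hx]
  filter_upwards [ae_apply_eq_zero_of_abs_le_smul_abs hC u,
    ae_apply_eq_zero_of_abs_le_smul_abs hC v, Lp.coeFn_add (C u) (C v),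
    Lp.coeFn_smul c (C (Lp.const 2 μ (1 : ℝ))),
    indicatorConstLp_coeFn (p := 2) (hs := hs) (hμs := hμs) (c := c),
    indicatorConstLp_coeFn (p := 2) (hs := hs.compl) (hμs := measure_ne_top μ sᶜ) (c := c)]
    with x hu hv hadd hsmul hux hvx
  rw [huv, hsmul, Pi.add_apply, Pi.smul_apply, smul_eq_mul] at hadd
  by_cases hx : x ∈ s
  · rw [hvx, indicator_of_notMem (notMem_compl_iff.2 hx)] at hv
    rw [indicator_of_mem hx, mul_comm, hadd, hv rfl, add_zero]
  · rw [hux, indicator_of_notMem hx] at hu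
    rw [indicator_of_notMem hx, hu rfl, mul_zero]

lemma exists_eq_toCLM_of_abs_le_smul_abs (hpos : ∀ f, 0 ≤ f → 0 ≤ C f)
    (hC : ∀ f, |C f| ≤ l • |f|) :
    ∃ (g : α → ℝ) (hg : BoundedWeightedComp μ g id), 0 ≤ g ∧ C = hg.toCLM := by
  set one : Lp ℝ 2 μ := Lp.const 2 μ (1 : ℝ)
  have hone : one =ᵐ[μ] 1 := Lp.coeFn_const (p := 2) (μ := μ) (1 : ℝ)
  have hg₀ : ∀ᵐ x ∂μ, 0 ≤ C one x ∧ C one x ≤ l := by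
    have hone_nonneg : 0 ≤ one := (Lp.coeFn_nonneg _).1 (hone.mono fun x hx ↦ by simp [hx])
    filter_upwards [(Lp.coeFn_nonneg _).2 (hpos one hone_nonneg), (Lp.coeFn_le _ _).2 (hC one),
      Lp.coeFn_abs (C one), Lp.coeFn_smul l |one|, Lp.coeFn_abs one, hone]
      with x hx₀ hx hCx hlx hx₁ hx₂
    rw [hCx, hlx, Pi.smul_apply, hx₁, hx₂, Pi.one_apply, abs_one, smul_eq_mul, mul_one] at hx
    exact ⟨hx₀, (le_abs_self _).trans hx⟩
  -- truncating the multiplier `C one` makes its bounds hold everywhere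
  set g : α → ℝ := fun x ↦ max 0 (min l (C one x))
  have hg : BoundedWeightedComp μ g id :=
    .of_map_id (measurable_const.max (measurable_const.min (Lp.stronglyMeasurable _).measurable))
      ⟨|l|, fun x ↦ abs_le.2 ⟨(neg_nonpos.2 (abs_nonneg l)).trans (le_max_left _ _),
        max_le (abs_nonneg l) ((min_le_left _ _).trans (le_abs_self l))⟩⟩
  have hg_ae : g =ᵐ[μ] C one := by
    filter_upwards [hg₀] with x hx
    simp only [g, min_eq_right hx.2, max_eq_right hx.1]
  refine ⟨g, hg, fun x ↦ le_max_left _ _, ?_⟩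
  ext1 f
  induction f using Lp.induction (p := 2) ENNReal.ofNat_ne_top with
  | @indicatorConst c s hs hμs =>
    rw [Lp.simpleFunc.coe_indicatorConst]
    refine Lp.ext ?_
    filter_upwards [apply_indicatorConstLp_ae_eq hC hs hμs.ne c, hg.coeFn_toCLM _,
      indicatorConstLp_coeFn (p := 2) (hs := hs) (hμs := hμs.ne) (c := c), hg_ae]
      with x h₁ h₂ h₃ h₄
    rw [h₁, h₂, id, h₃, h₄]
  | add _ _ _ hf hf' => rw [map_add, map_add, hf, hf']
  | isClosed => exact isClosed_eq C.continuous hg.toCLM.continuous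

end Central

section ExitValue

variable {X : Type*} (g : X → ℝ) (φ : X → X)

lemma exists_iterate_ne_zero_or_forall (x : X) :
    ∃ n, g (φ^[n] x) ≠ 0 ∨ ∀ k, g (φ^[k] x) = 0 := by
  by_cases h : ∀ k, g (φ^[k] x) = 0
  · exact ⟨0, .inr h⟩
  · push Not at h
    exact h.imp fun _ ↦ .inl

open Classical in
/-- The value of `g` at the first point of the forward `φ`-orbit of `x` where `g` does not
vanish, or `0` if there is none. -/
def exitValue (x : X) : ℝ :=
  g (φ^[Nat.find (exists_iterate_ne_zero_or_forall g φ x)] x)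

variable {g φ}

lemma exitValue_eq_of_forall_lt {x : X} {n : ℕ} (hn : g (φ^[n] x) ≠ 0)
    (hlt : ∀ k < n, g (φ^[k] x) = 0) : exitValue g φ x = g (φ^[n] x) := by
  classical
  rw [exitValue]
  congr
  rw [Nat.find_eq_iff]
  refine ⟨.inl hn, fun k hk ↦ ?_⟩
  push Not
  exact ⟨hlt k hk, n, hn⟩

lemma exitValue_eq_zero {x : X} (h : ∀ k, g (φ^[k] x) = 0) : exitValue g φ x = 0 := h _

lemma exitValue_eq_add_ite (x : X) :
    exitValue g φ x = g x + if g x = 0 then exitValue g φ (φ x) else 0 := by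
  classical
  by_cases hall : ∀ k, g (φ^[k] x) = 0
  · have hφx : ∀ k, g (φ^[k] (φ x)) = 0 := fun k ↦ by
      rw [← iterate_succ_apply]; exact hall _
    simp [exitValue_eq_zero hall, exitValue_eq_zero hφx, show g x = 0 from hall 0]
  push Not at hall
  obtain ⟨n, hn, hlt⟩ : ∃ n, g (φ^[n] x) ≠ 0 ∧ ∀ k < n, g (φ^[k] x) = 0 :=
    ⟨Nat.find hall, Nat.find_spec hall, fun k hk ↦ not_not.1 (Nat.find_min hall hk)⟩
  rw [exitValue_eq_of_forall_lt hn hlt]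
  split_ifs with hx
  · obtain ⟨m, rfl⟩ := Nat.exists_eq_succ_of_ne_zero (show n ≠ 0 by rintro rfl; exact hn hx)
    rw [iterate_succ_apply] at hn ⊢
    rw [exitValue_eq_of_forall_lt hn fun k hk ↦ by
      rw [← iterate_succ_apply]; exact hlt _ (Nat.succ_lt_succ hk), hx, zero_add]
  · obtain rfl : n = 0 := by_contra fun h ↦ hx (hlt 0 (Nat.pos_of_ne_zero h))
    simp

lemma measurable_exitValue [MeasurableSpace X] (hg : Measurable g) (hφ : Measurable φ) :
    Measurable (exitValue g φ) := by
  classical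
  have hgn : ∀ n, Measurable fun x ↦ g (φ^[n] x) := fun n ↦ hg.comp (hφ.iterate n)
  have hfind : Measurable fun x ↦ Nat.find (exists_iterate_ne_zero_or_forall g φ x) :=
    measurable_find _ fun k ↦ ((hgn k) (measurableSet_singleton 0).compl).union <|
      measurableSet_setOfPred.2 <| Measurable.forall fun j ↦ measurableSet_setOfPred.1 <|
        (hgn j) (measurableSet_singleton 0)
  exact (measurable_from_prod_countable_left (f := fun p : X × ℕ ↦ g (φ^[p.2] p.1)) hgn).comp
    (measurable_id.prodMk hfind)

end ExitValue

section SelfCommutator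

variable {α : Type*} [MeasurableSpace α] {μ : Measure α}

theorem exists_nonneg_selfCommutator_eq_of_isometry {g k : α → ℝ} {θ : α → α}
    (hg : BoundedWeightedComp μ g id) (hg₀ : 0 ≤ g) (hV : BoundedWeightedComp μ k θ)
    (hk : 0 ≤ k) (hVV : adjoint hV.toCLM ∘L hV.toCLM = 1)
    (hQ : BoundedWeightedComp μ ({x | g x = 0}.indicator 1) id)
    (hVQ : hV.toCLM ∘L adjoint hV.toCLM = hQ.toCLM) :
    ∃ A : Lp ℝ 2 μ →L[ℝ] Lp ℝ 2 μ, (∀ f, 0 ≤ f → 0 ≤ A f) ∧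
      adjoint A ∘L A - A ∘L adjoint A = hg.toCLM := by
  obtain ⟨b, hb⟩ := hg.exists_abs_weight_le
  set h := exitValue g θ
  have hmeas : Measurable h := measurable_exitValue hg.measurable_weight hV.measurable_map
  have hh₀ : ∀ x, 0 ≤ h x := fun x ↦ hg₀ _
  have hH : BoundedWeightedComp μ h id := .of_map_id hmeas ⟨b, fun x ↦ hb _⟩
  have hHθ : BoundedWeightedComp μ (h ∘ θ) id :=
    .of_map_id (hmeas.comp hV.measurable_map) ⟨b, fun x ↦ hb _⟩
  have hS : BoundedWeightedComp μ (fun x ↦ √(h x)) id :=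
    .of_map_id hmeas.sqrt ⟨√b, fun x ↦ by
      rw [abs_of_nonneg (Real.sqrt_nonneg _)]
      exact Real.sqrt_le_sqrt ((le_abs_self _).trans (hb _))⟩
  have hSS : hS.toCLM ∘L hS.toCLM = hH.toCLM :=
    hS.toCLM_comp_toCLM hS hH (fun x ↦ (Real.mul_self_sqrt (hh₀ x)).symm)
      (ae_of_all _ fun _ _ ↦ rfl)
  have hHQ : hHθ.toCLM ∘L hQ.toCLM = (hQ.mul_left hHθ).toCLM :=
    hHθ.toCLM_comp_toCLM hQ _ (fun _ ↦ rfl) (ae_of_all _ fun _ _ ↦ rfl)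
  have hHg : hH.toCLM - (hQ.mul_left hHθ).toCLM = hg.toCLM :=
    hH.toCLM_sub_toCLM _ hg fun x ↦ by
      simp only [h, comp_apply]
      rw [exitValue_eq_add_ite x]
      by_cases hx : g x = 0 <;> simp [hx]
  refine ⟨hV.toCLM ∘L hS.toCLM, fun f hf ↦ hV.toCLM_nonneg hk (hS.toCLM_nonneg
    (fun x ↦ Real.sqrt_nonneg _) hf), ?_⟩
  rw [adjoint_comp_self_sub_self_comp_adjoint_comp hVV hS.isSelfAdjoint_toCLM, hSS,
    ← ContinuousLinearMap.comp_assoc, hV.toCLM_comp_toCLM_of_map_id hH hHθ,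
    ContinuousLinearMap.comp_assoc, hVQ, hHQ, hHg]

variable {Z : Set α} {φ ψ : α → α} {m : ℝ≥0}

lemma map_le_smul_of_ae_leftInverse (hφ : Measurable φ) (hψ : Measurable ψ) (hm : m ≠ 0)
    (hφμ : (μ.restrict Z).map φ = (m : ℝ≥0∞) • μ) (hψφ : ∀ᵐ x ∂μ.restrict Z, ψ (φ x) = x) :
    μ.map ψ ≤ ((m⁻¹ : ℝ≥0) : ℝ≥0∞) • μ := by
  have h : (m : ℝ≥0∞) • μ.map ψ = μ.restrict Z := by
    rw [← Measure.map_smul, ← hφμ, Measure.map_map hψ hφ,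
      Measure.map_congr (f := ψ ∘ φ) (g := id) hψφ, Measure.map_id]
  calc μ.map ψ = ((m⁻¹ : ℝ≥0) : ℝ≥0∞) • ((m : ℝ≥0∞) • μ.map ψ) := by
        rw [smul_smul, ← ENNReal.coe_mul, inv_mul_cancel₀ hm, ENNReal.coe_one, one_smul]
    _ ≤ _ := by rw [h]; gcongr; exact Measure.restrict_le_self

variable (μ) in
lemma BoundedWeightedComp.indicator_inv_sqrt (hZ : MeasurableSet Z) (hφ : Measurable φ)
    (hφμ : (μ.restrict Z).map φ = (m : ℝ≥0∞) • μ) :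
    BoundedWeightedComp μ (Z.indicator fun _ ↦ (√(m : ℝ))⁻¹) φ :=
  .of_support_subset (measurable_const.indicator hZ) ⟨(√(m : ℝ))⁻¹, fun x ↦ by
    by_cases hx : x ∈ Z <;> simp [hx, abs_of_nonneg (Real.sqrt_nonneg _)]⟩
    hφ support_indicator_subset hφμ.le

lemma adjoint_comp_toCLM_indicator_inv_sqrt (hZ : MeasurableSet Z) (hm : m ≠ 0)
    (hφμ : (μ.restrict Z).map φ = (m : ℝ≥0∞) • μ)
    (hV : BoundedWeightedComp μ (Z.indicator fun _ ↦ (√(m : ℝ))⁻¹) φ) :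
    adjoint hV.toCLM ∘L hV.toCLM = 1 := by
  refine hV.adjoint_comp_toCLM_eq_one ?_
  have hk : (fun x ↦ ((‖Z.indicator (fun _ ↦ (√(m : ℝ))⁻¹) x‖₊ ^ 2 : ℝ≥0) : ℝ≥0∞))
      = Z.indicator fun _ ↦ (m : ℝ≥0∞)⁻¹ := by
    have hm2 : ‖√(m : ℝ)‖₊ ^ 2 = m := NNReal.eq (by simp [Real.sq_sqrt])
    funext x
    by_cases hx : x ∈ Z <;> simp [hx, hm2, ENNReal.coe_inv hm]
  rw [hk, withDensity_indicator hZ, withDensity_const, Measure.map_smul, hφμ, smul_smul,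
    ENNReal.inv_mul_cancel (by simpa) ENNReal.coe_ne_top, one_smul]

lemma toCLM_comp_adjoint_indicator_inv_sqrt (hZ : MeasurableSet Z) (hφ : Measurable φ)
    (hψ : Measurable ψ) (hm : m ≠ 0) (hφμ : (μ.restrict Z).map φ = (m : ℝ≥0∞) • μ)
    (hψφ : ∀ᵐ x ∂μ.restrict Z, ψ (φ x) = x)
    (hV : BoundedWeightedComp μ (Z.indicator fun _ ↦ (√(m : ℝ))⁻¹) φ)
    (hQ : BoundedWeightedComp μ (Z.indicator 1) id) :
    hV.toCLM ∘L adjoint hV.toCLM = hQ.toCLM := by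
  have hW : BoundedWeightedComp μ (fun _ ↦ √(m : ℝ)) ψ :=
    .of_support_subset measurable_const
      ⟨√(m : ℝ), fun _ ↦ (abs_of_nonneg (Real.sqrt_nonneg _)).le⟩ hψ (subset_univ _)
      (by rw [Measure.restrict_univ]; exact map_le_smul_of_ae_leftInverse hφ hψ hm hφμ hψφ)
  refine comp_adjoint_eq_of_comp_eq (adjoint_comp_toCLM_indicator_inv_sqrt hZ hm hφμ hV)
    (hV.toCLM_comp_toCLM hW hQ (fun x ↦ ?_) ?_)
    (hQ.toCLM_comp_toCLM hV hV (fun x ↦ ?_) (ae_of_all _ fun _ _ ↦ rfl)) hQ.isSelfAdjoint_toCLM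
  · by_cases hx : x ∈ Z <;> simp [hx, hm]
  · filter_upwards [(ae_restrict_iff' hZ).1 hψφ] with x hx hQx
    exact (hx (mem_of_indicator_ne_zero hQx)).symm
  · by_cases hx : x ∈ Z <;> simp [hx]

theorem exists_nonneg_selfCommutator_eq_toCLM {g : α → ℝ} (hg : BoundedWeightedComp μ g id)
    (hg₀ : 0 ≤ g) (hφ : Measurable φ) (hψ : Measurable ψ) (hm : m ≠ 0)
    (hφμ : (μ.restrict {x | g x = 0}).map φ = (m : ℝ≥0∞) • μ)
    (hψφ : ∀ᵐ x ∂μ.restrict {x | g x = 0}, ψ (φ x) = x) :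
    ∃ A : Lp ℝ 2 μ →L[ℝ] Lp ℝ 2 μ, (∀ f, 0 ≤ f → 0 ≤ A f) ∧
      adjoint A ∘L A - A ∘L adjoint A = hg.toCLM := by
  have hZ : MeasurableSet {x | g x = 0} := hg.measurable_weight (measurableSet_singleton 0)
  have hV := BoundedWeightedComp.indicator_inv_sqrt μ hZ hφ hφμ
  have hQ : BoundedWeightedComp μ ({x | g x = 0}.indicator 1) id :=
    .of_map_id (measurable_const.indicator hZ) ⟨1, fun x ↦ by by_cases hx : g x = 0 <;> simp [hx]⟩
  exact exists_nonneg_selfCommutator_eq_of_isometry hg hg₀ hV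
    (indicator_nonneg fun _ _ ↦ inv_nonneg.2 (Real.sqrt_nonneg _))
    (adjoint_comp_toCLM_indicator_inv_sqrt hZ hm hφμ hV) hQ
    (toCLM_comp_adjoint_indicator_inv_sqrt hZ hφ hψ hm hφμ hψφ hV hQ)

end SelfCommutator
section UnitInterval

open ProbabilityTheory unitInterval
open scoped Topology

lemma ProbabilityTheory.continuous_cdf (ρ : Measure ℝ) [IsProbabilityMeasure ρ]
    [NullSingletonClass ρ] : Continuous (cdf ρ) := by
  refine continuous_iff_continuousAt.2 fun x ↦
    (monotone_cdf ρ).continuousAt_iff_leftLim_eq_rightLim.2 ?_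
  have h := (cdf ρ).measure_singleton x
  rw [measure_cdf, measure_singleton, eq_comm, ENNReal.ofReal_eq_zero, sub_nonpos] at h
  rw [(cdf ρ).rightLim_eq]
  exact le_antisymm ((monotone_cdf ρ).leftLim_le le_rfl) h

lemma Monotone.exists_preimage_Iic_eq {F : ℝ → ℝ} (hF : Monotone F) (hc : Continuous F) {s : ℝ}
    (h₁ : ∃ t, F t ≤ s) (h₂ : ∃ t, s < F t) : ∃ u, F u = s ∧ F ⁻¹' Iic s = Iic u := by
  set T := F ⁻¹' Iic s
  obtain ⟨t₂, ht₂⟩ := h₂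
  have hbdd : BddAbove T := ⟨t₂, fun t ht ↦ le_of_lt (hF.reflect_lt (ht.trans_lt ht₂))⟩
  have hu : sSup T ∈ T := (isClosed_Iic.preimage hc).csSup_mem h₁ hbdd
  refine ⟨sSup T, le_antisymm hu (not_lt.1 fun hlt ↦ ?_), Subset.antisymm
    (fun t ht ↦ le_csSup hbdd ht) fun t ht ↦ (hF ht).trans hu⟩
  obtain ⟨b, hb, hub⟩ := ((((hc.tendsto _).eventually (gt_mem_nhds hlt)).filter_mono
    nhdsWithin_le_nhds).and self_mem_nhdsWithin).exists (f := 𝓝[>] sSup T)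
  exact (not_le.2 hub) (le_csSup hbdd hb.le)

lemma ProbabilityTheory.map_cdf (ρ : Measure ℝ) [IsProbabilityMeasure ρ] [NullSingletonClass ρ] :
    ρ.map (cdf ρ) = volume.restrict (Icc 0 1) := by
  have hc := continuous_cdf ρ
  refine Measure.ext_of_Iic _ _ fun s ↦ ?_
  rw [Measure.map_apply hc.measurable measurableSet_Iic, Measure.restrict_apply measurableSet_Iic]
  rcases lt_or_ge s 0 with hs | hs
  · have hT : cdf ρ ⁻¹' Iic s = ∅ :=
      eq_empty_of_forall_notMem fun t ht ↦ (hs.trans_le (cdf_nonneg ρ t)).not_ge ht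
    have hI : Iic s ∩ Icc 0 1 = ∅ :=
      eq_empty_of_forall_notMem fun t ht ↦ (hs.trans_le ht.2.1).not_ge ht.1
    rw [hT, hI, measure_empty, measure_empty]
  rcases le_or_gt 1 s with hs₁ | hs₁
  · have hT : cdf ρ ⁻¹' Iic s = univ := eq_univ_of_forall fun t ↦ (cdf_le_one ρ t).trans hs₁
    rw [hT, inter_eq_right.2 fun t ht ↦ ht.2.trans hs₁, measure_univ, Real.volume_Icc]
    simp
  have hI : Iic s ∩ Icc 0 1 = Icc 0 s := by
    ext t
    exact ⟨fun ⟨h₁, h₂, _⟩ ↦ ⟨h₂, h₁⟩, fun ⟨h₁, h₂⟩ ↦ ⟨h₂, h₁, h₂.trans hs₁.le⟩⟩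
  rw [hI, Real.volume_Icc, sub_zero]
  rcases (cdf ρ ⁻¹' Iic s).eq_empty_or_nonempty with hT | ⟨t, ht⟩
  · obtain rfl : s = 0 := by
      refine le_antisymm (not_lt.1 fun hs₀ ↦ ?_) hs
      obtain ⟨t, ht⟩ := ((tendsto_cdf_atBot (μ := ρ)).eventually (gt_mem_nhds hs₀)).exists
      exact (eq_empty_iff_forall_notMem.1 hT) t ht.le
    simp [hT]
  obtain ⟨u, hu, hT⟩ := (monotone_cdf ρ).exists_preimage_Iic_eq hc ⟨t, ht⟩
    ((tendsto_cdf_atTop (μ := ρ)).eventually (lt_mem_nhds hs₁)).exists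
  rw [hT, ← ofReal_cdf, hu]

/- If `F x = F y` with `x < y`, then `F` takes the value `F x` at a rational point, so all failures
of strict monotonicity lie in the countably many fibres `F ⁻¹' {F q}`, `q : ℚ`. -/
lemma Monotone.exists_strictMonoOn_ae {F : ℝ → ℝ} (hF : Monotone F) {ρ : Measure ℝ}
    (hρ : ∀ c, ρ (F ⁻¹' {c}) = 0) : ∃ S, MeasurableSet S ∧ ρ Sᶜ = 0 ∧ StrictMonoOn F S := by
  refine ⟨(⋃ q : ℚ, F ⁻¹' {F q})ᶜ,
    (MeasurableSet.iUnion fun q ↦ hF.measurable (measurableSet_singleton _)).compl,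
    by rw [compl_compl]; exact measure_iUnion_null fun q ↦ hρ _, fun x hx y _ hxy ↦ ?_⟩
  refine (hF hxy.le).lt_of_ne fun hFxy ↦ hx (mem_iUnion.2 ?_)
  obtain ⟨q, hxq, hqy⟩ := exists_rat_btwn hxy
  exact ⟨q, le_antisymm (hF hxq.le) (hFxy ▸ hF hqy.le)⟩

lemma exists_measurable_leftInvOn {α β : Type*} [MeasurableSpace α] [StandardBorelSpace α]
    [MeasurableSpace β] [MeasurableSpace.CountablySeparated β] {f : α → β} (hf : Measurable f)
    {S : Set α} (hS : MeasurableSet S) (hSne : S.Nonempty) (hinj : InjOn f S) :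
    ∃ g : β → α, Measurable g ∧ LeftInvOn g f S := by
  have := hS.standardBorel
  have he : MeasurableEmbedding (S.domRestrict f) :=
    (hf.comp measurable_subtype_coe).measurableEmbedding hinj.injective
  refine ⟨extend (S.domRestrict f) Subtype.val fun _ ↦ hSne.some,
    he.measurable_extend measurable_subtype_coe measurable_const, fun x hx ↦ ?_⟩
  exact he.injective.extend_apply _ _ (⟨x, hx⟩ : S)

theorem exists_map_eq_volume_unitInterval {α : Type*} [MeasurableSpace α] [StandardBorelSpace α]
    (ν : Measure α) [IsProbabilityMeasure ν] [NullSingletonClass ν] :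
    ∃ (φ : α → I) (ψ : I → α), Measurable φ ∧ Measurable ψ ∧ ν.map φ = volume ∧
      ∀ᵐ x ∂ν, ψ (φ x) = x := by
  obtain ⟨e, he⟩ := exists_measurableEmbedding_real α
  set ρ := ν.map e
  have : IsProbabilityMeasure ρ := Measure.isProbabilityMeasure_map he.measurable.aemeasurable
  have : NullSingletonClass ρ := ⟨fun t ↦ by
    rw [Measure.map_apply he.measurable (measurableSet_singleton t)]
    exact (subsingleton_singleton.preimage he.injective).measure_zero ν⟩
  set φ : α → I := fun x ↦ ⟨cdf ρ (e x), cdf_nonneg ρ _, cdf_le_one ρ _⟩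
  have hφ : Measurable φ :=
    ((continuous_cdf ρ).measurable.comp he.measurable).subtype_mk
  have hmap : ν.map φ = volume := by
    refine measurableEmbedding_coe.map_injective ?_
    rw [Measure.map_map measurable_subtype_coe hφ, measurePreserving_coe.map_eq,
      ← map_cdf ρ, Measure.map_map (continuous_cdf ρ).measurable he.measurable]
    rfl
  obtain ⟨S, hS, hSρ, hmono⟩ := (monotone_cdf ρ).exists_strictMonoOn_ae (ρ := ρ) fun c ↦ by
    rw [← Measure.map_apply (continuous_cdf ρ).measurable (measurableSet_singleton c), map_cdf]
    exact measure_singleton c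
  have hS' : ν (e ⁻¹' S)ᶜ = 0 := by
    rwa [← preimage_compl, ← Measure.map_apply he.measurable hS.compl]
  have hne : (e ⁻¹' S).Nonempty := by
    refine nonempty_iff_ne_empty.2 fun h ↦ ?_
    rw [h, compl_empty, measure_univ] at hS'
    exact one_ne_zero hS'
  obtain ⟨ψ, hψ, hψφ⟩ := exists_measurable_leftInvOn hφ (he.measurable hS) hne
    fun x hx y hy hxy ↦ he.injective (hmono.injOn hx hy (congrArg Subtype.val hxy))
  exact ⟨φ, ψ, hφ, hψ, hmap, measure_mono_null (fun x hx ↦ fun hxS ↦ hx (hψφ hxS)) hS'⟩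

theorem exists_map_eq_smul_volume_unitInterval {α : Type*} [MeasurableSpace α]
    [StandardBorelSpace α] (ν : Measure α) [IsFiniteMeasure ν] [NullSingletonClass ν]
    (hν : ν ≠ 0) :
    ∃ (φ : α → I) (ψ : I → α), Measurable φ ∧ Measurable ψ ∧
      ν.map φ = ν univ • volume ∧ ∀ᵐ x ∂ν, ψ (φ x) = x := by
  have hν' : ν univ ≠ 0 := Measure.measure_univ_ne_zero.2 hν
  have : IsProbabilityMeasure ((ν univ)⁻¹ • ν) :=
    ⟨by simp [ENNReal.inv_mul_cancel hν' (measure_ne_top _ _)]⟩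
  have : NullSingletonClass ((ν univ)⁻¹ • ν) := ⟨fun x ↦ by simp⟩
  obtain ⟨φ, ψ, hφ, hψ, hmap, hψφ⟩ := exists_map_eq_volume_unitInterval ((ν univ)⁻¹ • ν)
  have hscale : ν univ • (ν univ)⁻¹ • ν = ν := by
    rw [smul_smul, ENNReal.mul_inv_cancel hν' (measure_ne_top _ _), one_smul]
  refine ⟨φ, ψ, hφ, hψ, ?_, hscale ▸ Measure.ae_smul_measure hψφ (ν univ)⟩
  rw [← hmap, ← Measure.map_smul, hscale]

end UnitInterval

/-- Every positive central operator on `L²[0,1]` with infinite-dimensional kernel is a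
self-commutator of a positive operator. -/
theorem positive_central_infinite_kernel_is_selfCommutator_L2
    (C : Lp ℝ 2 (volume : Measure (Set.Icc (0:ℝ) 1)) →L[ℝ]
      Lp ℝ 2 (volume : Measure (Set.Icc (0:ℝ) 1)))
    (hC_pos : ∀ f, 0 ≤ f → 0 ≤ C f)
    (hC_central : ∃ l : ℝ, 0 ≤ l ∧ ∀ f, |C f| ≤ l • |f|)
    (hC_ker : ¬ FiniteDimensional ℝ (LinearMap.ker C.toLinearMap)) :
    ∃ A : Lp ℝ 2 (volume : Measure (Set.Icc (0:ℝ) 1)) →L[ℝ]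
        Lp ℝ 2 (volume : Measure (Set.Icc (0:ℝ) 1)),
      (∀ f, 0 ≤ f → 0 ≤ A f) ∧
      C = adjoint A ∘L A - A ∘L adjoint A := by
  obtain ⟨l, -, hl⟩ := hC_central
  obtain ⟨g, hg, hg₀, rfl⟩ := exists_eq_toCLM_of_abs_le_smul_abs hC_pos hl
  set Z := {x | g x = 0}
  have hZ : volume Z ≠ 0 := fun hZ ↦ hC_ker (by rw [hg.ker_toCLM_eq_bot hZ]; infer_instance)
  obtain ⟨φ, ψ, hφ, hψ, hφμ, hψφ⟩ :=
    exists_map_eq_smul_volume_unitInterval (volume.restrict Z) (by simpa using hZ)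
  rw [Measure.restrict_apply_univ, ← ENNReal.coe_toNNReal (measure_ne_top _ _)] at hφμ
  obtain ⟨A, hA, hAg⟩ := exists_nonneg_selfCommutator_eq_toCLM hg hg₀ hφ hψ
    (by simpa [ENNReal.toNNReal_eq_zero_iff] using hZ) hφμ hψφ
  exact ⟨A, hA, hAg.symm⟩
end
end

section
/- Let p be a real number with 1 ≤ p < ∞ and let C be a positive central bounded linear operator on ℓᵖ whose kernel is infinite-dimensional. Then C is a commutator of positive operators: there exist positive bounded linear operators A and B on ℓᵖ such that C = A ∘ B − B ∘ A. -/
/-!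
A central operator `C` on `ℓᵖ` is the diagonal operator of a bounded sequence `c`, nonnegative when
`C` is positive, and its kernel is infinite-dimensional exactly when `c` vanishes on an infinite
set `S`. Using `S`, one lays out disjoint chains `t = φ (t, 0), φ (t, 1), φ (t, 2), …` covering
the complement of `S` and with `φ (t, k + 1) ∈ S`. With `B` the forward shift along the chains
and `A` the backward shift along the chain of `t` weighted by `c t`, the operator `A B - B A`
acts on the chain of `t` as `c t` times the projection onto its first vector, so `A B - B A = C`.
-/

open ContinuousLinearMap Function Set
open scoped ENNReal

variable {ι κ α E : Type*} [NormedAddCommGroup E]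

section Memℓp

variable {p : ℝ≥0∞}

theorem norm_rpow_extend_zero {g : ι → E} (u : ι → κ) {r : ℝ} (hr : 0 < r) :
    (fun i ↦ ‖extend u g 0 i‖ ^ r) = extend u (fun j ↦ ‖g j‖ ^ r) 0 := by
  ext i
  rw [apply_extend (fun y : E ↦ ‖y‖ ^ r)]
  congr
  ext
  simp [hr.ne']

theorem Memℓp.comp_injective {f : κ → E} (hf : Memℓp f p) {v : ι → κ} (hv : Injective v) :
    Memℓp (f ∘ v) p := by
  rcases p.trichotomy with rfl | rfl | hp
  · exact memℓp_zero (hf.finite_dsupport.preimage hv.injOn)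
  · exact memℓp_infty (hf.bddAbove.mono (range_comp_subset_range v fun j => ‖f j‖))
  · exact memℓp_gen ((hf.summable hp).comp_injective hv)

theorem Memℓp.extend_zero {g : ι → E} (hg : Memℓp g p) {u : ι → κ} (hu : Injective u) :
    Memℓp (extend u g 0) p := by
  rcases p.trichotomy with rfl | rfl | hp
  · refine memℓp_zero ((hg.finite_dsupport.image u).subset ?_)
    intro i hi
    by_cases h : ∃ j, u j = i
    · obtain ⟨j, rfl⟩ := h
      exact ⟨j, by simpa [hu.extend_apply] using hi, rfl⟩
    · simp [extend_apply' _ _ _ h] at hi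
  · refine memℓp_infty ((hg.bddAbove.insert 0).mono ?_)
    rintro _ ⟨i, rfl⟩
    by_cases h : ∃ j, u j = i
    · obtain ⟨j, rfl⟩ := h
      simp [hu.extend_apply]
    · simp [extend_apply' _ _ _ h]
  · apply memℓp_gen
    rw [norm_rpow_extend_zero u hp, summable_extend_zero hu]
    exact hg.summable hp

end Memℓp

namespace lp

variable (𝕜 : Type*) [NontriviallyNormedField 𝕜] [NormedSpace 𝕜 E] (p : ℝ≥0∞) [Fact (1 ≤ p)]

noncomputable def compCLM {v : ι → κ} (hv : Injective v) :
    lp (fun _ : κ => E) p →L[𝕜] lp (fun _ : ι => E) p :=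
  LinearMap.mkContinuous
    { toFun x := ⟨x ∘ v, (lp.memℓp x).comp_injective hv⟩
      map_add' _ _ := rfl
      map_smul' _ _ := rfl }
    1
    fun x ↦ by
      rw [one_mul]
      rcases p.trichotomy with rfl | rfl | hp
      · exact absurd (Fact.out : (1 : ℝ≥0∞) ≤ 0) (by simp)
      · exact norm_le_of_forall_le (norm_nonneg _) fun i ↦ norm_apply_le_norm (by simp) x (v i)
      · refine norm_le_of_forall_sum_le hp (norm_nonneg _) fun s ↦ ?_
        have := sum_rpow_le_norm_rpow hp x (s.map ⟨v, hv⟩)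
        rwa [Finset.sum_map] at this

@[simp]
theorem compCLM_apply {v : ι → κ} (hv : Injective v) (x : lp (fun _ : κ => E) p) (i : ι) :
    compCLM 𝕜 p hv x i = x (v i) :=
  rfl

noncomputable def extendZeroCLM {u : ι → κ} (hu : Injective u) :
    lp (fun _ : ι => E) p →L[𝕜] lp (fun _ : κ => E) p :=
  LinearMap.mkContinuous
    { toFun x := ⟨extend u x 0, (lp.memℓp x).extend_zero hu⟩
      map_add' x y := lp.ext <| by
        have := extend_add u (⇑x) (⇑y) (0 : κ → E) 0
        rwa [add_zero] at this
      map_smul' c x := lp.ext <| by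
        have := extend_smul c u (⇑x) (0 : κ → E)
        rwa [smul_zero] at this }
    1
    fun x ↦ by
      rw [one_mul]
      rcases p.trichotomy with rfl | rfl | hp
      · exact absurd (Fact.out : (1 : ℝ≥0∞) ≤ 0) (by simp)
      · refine norm_le_of_forall_le (norm_nonneg _) fun i ↦ ?_
        by_cases h : ∃ j, u j = i
        · obtain ⟨j, rfl⟩ := h
          simpa [hu.extend_apply] using norm_apply_le_norm (by simp) x j
        · simp [extend_apply' _ _ _ h]
      · refine norm_le_of_tsum_le hp (norm_nonneg _) (le_of_eq ?_)
        change ∑' i, ‖extend u (⇑x) 0 i‖ ^ p.toReal = _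
        rw [norm_rpow_extend_zero u hp, tsum_extend_zero hu, norm_rpow_eq_tsum hp]

@[simp]
theorem extendZeroCLM_apply_apply {u : ι → κ} (hu : Injective u) (x : lp (fun _ : ι => E) p)
    (j : ι) : extendZeroCLM 𝕜 p hu x (u j) = x j :=
  hu.extend_apply _ _ _

theorem extendZeroCLM_apply_of_notMem_range {u : ι → κ} (hu : Injective u)
    (x : lp (fun _ : ι => E) p) {i : κ} (hi : i ∉ range u) : extendZeroCLM 𝕜 p hu x i = 0 :=
  extend_apply' _ _ _ hi

variable {𝕜}

noncomputable def weightedReindexCLM {u : α → ι} {v : α → κ} (hu : Injective u)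
    (hv : Injective v) (w : α → 𝕜) {M : ℝ} (hM : 0 ≤ M) (hw : ∀ j, ‖w j‖ ≤ M) :
    lp (fun _ : κ => E) p →L[𝕜] lp (fun _ : ι => E) p :=
  extendZeroCLM 𝕜 p hu ∘L
    mapCLM p (fun j ↦ w j • ContinuousLinearMap.id 𝕜 E) hM
      (fun j ↦ (norm_smul_le _ _).trans <| by simpa using mul_le_mul (hw j) norm_id_le (by simp) hM)
    ∘L compCLM 𝕜 p hv

section WeightedReindex

variable {u : α → ι} {v : α → κ} (hu : Injective u) (hv : Injective v) (w : α → 𝕜) {M : ℝ}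
  (hM : 0 ≤ M) (hw : ∀ j, ‖w j‖ ≤ M) (x : lp (fun _ : κ => E) p)

theorem weightedReindexCLM_apply_apply (j : α) :
    weightedReindexCLM p hu hv w hM hw x (u j) = w j • x (v j) := by
  simp [weightedReindexCLM]

theorem weightedReindexCLM_apply_of_notMem_range {i : ι} (hi : i ∉ range u) :
    weightedReindexCLM p hu hv w hM hw x i = 0 :=
  extendZeroCLM_apply_of_notMem_range 𝕜 p hu _ hi

end WeightedReindex

theorem weightedReindexCLM_nonneg {u : α → ι} {v : α → κ} (hu : Injective u) (hv : Injective v)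
    {w : α → ℝ} {M : ℝ} (hM : 0 ≤ M) (hw : ∀ j, ‖w j‖ ≤ M) (hw₀ : ∀ j, 0 ≤ w j)
    {x : lp (fun _ : κ => ℝ) p} (hx : ∀ i, 0 ≤ x i) (i : ι) :
    0 ≤ weightedReindexCLM p hu hv w hM hw x i := by
  by_cases hi : i ∈ range u
  · obtain ⟨j, rfl⟩ := hi
    rw [weightedReindexCLM_apply_apply]
    exact mul_nonneg (hw₀ j) (hx (v j))
  · rw [weightedReindexCLM_apply_of_notMem_range p hu hv w hM hw x hi]

section Chains

variable {φ : α × ℕ → ι} (hφ : Injective φ)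

variable (𝕜) in
noncomputable def chainShift : lp (fun _ : ι => E) p →L[𝕜] lp (fun _ : ι => E) p :=
  weightedReindexCLM p (hφ.comp (injective_id.prodMap Nat.succ_injective)) hφ (fun _ ↦ (1 : 𝕜))
    zero_le_one (by simp)

variable {a : α → 𝕜} {M : ℝ} (hM : 0 ≤ M) (ha : ∀ t, ‖a t‖ ≤ M)

noncomputable def chainBackShift : lp (fun _ : ι => E) p →L[𝕜] lp (fun _ : ι => E) p :=
  weightedReindexCLM p hφ (hφ.comp (injective_id.prodMap Nat.succ_injective)) (fun j ↦ a j.1) hM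
    (fun j ↦ ha j.1)

theorem chainBackShift_comp_chainShift_sub_apply {d : ι → 𝕜} (hd_zero : ∀ t, d (φ (t, 0)) = a t)
    (hd_succ : ∀ t k, d (φ (t, k + 1)) = 0) (hd_out : ∀ i ∉ range φ, d i = 0)
    (x : lp (fun _ : ι => E) p) (i : ι) :
    (chainBackShift p hφ hM ha ∘L chainShift 𝕜 p hφ - chainShift 𝕜 p hφ ∘L chainBackShift p hφ hM ha :
      lp (fun _ : ι => E) p →L[𝕜] lp (fun _ : ι => E) p) x i = d i • x i := by
  have hS : ∀ y : lp (fun _ : ι => E) p, ∀ t k, chainShift 𝕜 p hφ y (φ (t, k + 1)) = y (φ (t, k)) :=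
    fun y t k ↦ (weightedReindexCLM_apply_apply p _ hφ (fun _ ↦ (1 : 𝕜)) _ _ y (t, k)).trans
      (one_smul 𝕜 _)
  have hS0 : ∀ y : lp (fun _ : ι => E) p, ∀ i ∉ range (φ ∘ Prod.map id Nat.succ),
      chainShift 𝕜 p hφ y i = 0 :=
    fun y i hi ↦ weightedReindexCLM_apply_of_notMem_range p _ hφ (fun _ ↦ (1 : 𝕜)) _ _ y hi
  have hB : ∀ y : lp (fun _ : ι => E) p, ∀ t k,
      chainBackShift p hφ hM ha y (φ (t, k)) = a t • y (φ (t, k + 1)) :=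
    fun y t k ↦ weightedReindexCLM_apply_apply p hφ _ _ _ _ y (t, k)
  have hB0 : ∀ y : lp (fun _ : ι => E) p, ∀ i ∉ range φ, chainBackShift p hφ hM ha y i = 0 :=
    fun y i hi ↦ weightedReindexCLM_apply_of_notMem_range p hφ _ _ _ _ y hi
  rw [sub_apply, lp.coeFn_sub, Pi.sub_apply, ContinuousLinearMap.comp_apply,
    ContinuousLinearMap.comp_apply]
  by_cases hi : i ∈ range φ
  · obtain ⟨⟨t, _ | k⟩, rfl⟩ := hi
    · have : φ (t, 0) ∉ range (φ ∘ Prod.map id Nat.succ) := by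
        rintro ⟨j, hj⟩
        exact Nat.succ_ne_zero _ (Prod.ext_iff.1 (hφ hj)).2
      rw [hB, hS, hS0 _ _ this, hd_zero, sub_zero]
    · rw [hB, hS, hS, hB, hd_succ, zero_smul, sub_self]
  · have : i ∉ range (φ ∘ Prod.map id Nat.succ) := fun ⟨j, hj⟩ ↦ hi ⟨_, hj⟩
    rw [hB0 _ _ hi, hS0 _ _ this, hd_out i hi, zero_smul, sub_self]

end Chains

theorem chainShift_nonneg {φ : α × ℕ → ι} (hφ : Injective φ) {x : lp (fun _ : ι => ℝ) p}
    (hx : ∀ i, 0 ≤ x i) (i : ι) : 0 ≤ chainShift ℝ p hφ x i :=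
  weightedReindexCLM_nonneg p _ hφ _ _ (fun _ ↦ zero_le_one) hx i

theorem chainBackShift_nonneg {φ : α × ℕ → ι} (hφ : Injective φ) {a : α → ℝ} {M : ℝ} (hM : 0 ≤ M)
    (ha : ∀ t, ‖a t‖ ≤ M) (ha₀ : ∀ t, 0 ≤ a t) {x : lp (fun _ : ι => ℝ) p} (hx : ∀ i, 0 ≤ x i)
    (i : ι) : 0 ≤ chainBackShift p hφ hM ha x i :=
  weightedReindexCLM_nonneg p hφ _ hM _ (fun j ↦ ha₀ j.1) hx i

end lp

section Diagonal

variable {𝕜 : Type*} [NormedField 𝕜] {p : ℝ≥0∞}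
  (T : lp (fun _ : ι => 𝕜) p →ₗ[𝕜] lp (fun _ : ι => 𝕜) p)

theorem lp.apply_eq_mul_of_norm_apply_le [DecidableEq ι] {l : ℝ}
    (hT : ∀ x i, ‖T x i‖ ≤ l * ‖x i‖) (x : lp (fun _ : ι => 𝕜) p) (i : ι) :
    T x i = T (lp.single p i 1) i * x i := by
  have hx : (x - x i • lp.single p i 1 : lp (fun _ : ι => 𝕜) p) i = 0 := by
    rw [lp.coeFn_sub, lp.coeFn_smul, Pi.sub_apply, Pi.smul_apply, lp.single_apply_self, smul_eq_mul,
      mul_one, sub_self]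
  have h : T (x - x i • lp.single p i 1) i = 0 :=
    norm_le_zero_iff.1 <| (hT _ i).trans_eq <| by simp [hx]
  rw [map_sub, map_smul, lp.coeFn_sub, lp.coeFn_smul, Pi.sub_apply, Pi.smul_apply, smul_eq_mul,
    sub_eq_zero] at h
  rw [h, mul_comm]

theorem lp.finiteDimensional_ker_of_apply_eq_mul {c : ι → 𝕜} (hT : ∀ x i, T x i = c i * x i)
    (hc : {i | c i = 0}.Finite) : FiniteDimensional 𝕜 (LinearMap.ker T) := by
  have := hc.to_subtype
  refine FiniteDimensional.of_injective
    (LinearMap.pi fun i : {i | c i = 0} ↦ lp.evalₗ (𝕜 := 𝕜) _ p i.1 ∘ₗ (LinearMap.ker T).subtype)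
    ((injective_iff_map_eq_zero _).2 fun x hx ↦ Subtype.ext <| lp.ext <| funext fun i ↦ ?_)
  by_cases hi : c i = 0
  · exact congr_fun hx ⟨i, hi⟩
  · have : c i * x.1 i = 0 := by rw [← hT, x.2]; rfl
    exact (mul_eq_zero.1 this).resolve_left hi

end Diagonal

theorem Set.Infinite.exists_chains [Countable ι] {S : Set ι} (hS : S.Infinite) :
    ∃ φ : ι × ℕ → ι, Injective φ ∧ (∀ t ∉ S, φ (t, 0) = t) ∧
      ∀ t k, t ∈ S ∨ k ≠ 0 → φ (t, k) ∈ S := by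
  classical
  obtain ⟨e, he⟩ := Countable.exists_injective_nat (ι × ℕ)
  set g : ι × ℕ → S := hS.natEmbedding S ∘ e
  have hg : Injective g := (hS.natEmbedding S).injective.comp he
  refine ⟨fun j ↦ if j.1 ∉ S ∧ j.2 = 0 then j.1 else g j, ?_, fun t ht ↦ if_pos ⟨ht, rfl⟩,
    fun t k h ↦ ?_⟩
  · rintro ⟨t, k⟩ ⟨t', k'⟩ h
    dsimp only at h
    split_ifs at h with h₁ h₂ h₂
    · rw [h, h₁.2, h₂.2]
    · exact absurd (h ▸ (g (t', k')).2) h₁.1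
    · exact absurd (h ▸ (g (t, k)).2) h₂.1
    · exact hg (Subtype.ext h)
  · dsimp only
    rw [if_neg (by tauto)]
    exact (g (t, k)).2

theorem positive_central_infinite_kernel_is_commutator_lp_general
    (p : ℝ≥0∞) [hp1 : Fact (1 ≤ p)]
    (C : lp (fun _ : ℕ => ℝ) p →L[ℝ] lp (fun _ : ℕ => ℝ) p)
    (hC_pos : ∀ x : lp (fun _ : ℕ => ℝ) p, (∀ n, 0 ≤ x n) → ∀ n, 0 ≤ C x n)
    (hC_central : ∃ l : ℝ, 0 ≤ l ∧ ∀ (x : lp (fun _ : ℕ => ℝ) p) (n : ℕ), |C x n| ≤ l * |x n|)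
    (hC_ker : ¬ FiniteDimensional ℝ (LinearMap.ker C.toLinearMap)) :
    ∃ A B : lp (fun _ : ℕ => ℝ) p →L[ℝ] lp (fun _ : ℕ => ℝ) p,
      (∀ x : lp (fun _ : ℕ => ℝ) p, (∀ n, 0 ≤ x n) → ∀ n, 0 ≤ A x n) ∧
      (∀ x : lp (fun _ : ℕ => ℝ) p, (∀ n, 0 ≤ x n) → ∀ n, 0 ≤ B x n) ∧
      C = A ∘L B - B ∘L A := by
  obtain ⟨l, hl₀, hl⟩ := hC_central
  set c : ℕ → ℝ := fun n ↦ C (lp.single p n 1) n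
  have hdiag : ∀ x n, C x n = c n * x n :=
    lp.apply_eq_mul_of_norm_apply_le C.toLinearMap fun x n ↦ by
      rw [Real.norm_eq_abs, Real.norm_eq_abs]
      exact hl x n
  have hc₀ : ∀ n, 0 ≤ c n := fun n ↦
    hC_pos _ (by rw [lp.coeFn_single]; exact (Pi.single_nonneg (α := fun _ ↦ ℝ)).2 zero_le_one) n
  have hcl : ∀ n, ‖c n‖ ≤ l := fun n ↦ by simpa using hl (lp.single p n 1) n
  have hS : {n | c n = 0}.Infinite := fun hfin ↦
    hC_ker (lp.finiteDimensional_ker_of_apply_eq_mul C.toLinearMap hdiag hfin)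
  obtain ⟨φ, hφ, hφ_root, hφ_mem⟩ := hS.exists_chains
  refine ⟨lp.chainBackShift p hφ hl₀ hcl, lp.chainShift ℝ p hφ,
    fun x hx ↦ lp.chainBackShift_nonneg p hφ hl₀ hcl hc₀ hx,
    fun x hx ↦ lp.chainShift_nonneg p hφ hx, ?_⟩
  ext x n
  rw [hdiag, ← smul_eq_mul]
  refine (lp.chainBackShift_comp_chainShift_sub_apply p hφ hl₀ hcl (fun t ↦ ?_)
    (fun t k ↦ hφ_mem t (k + 1) (Or.inr k.succ_ne_zero)) (fun i hi ↦ ?_) x n).symm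
  · by_cases ht : c t = 0
    · rw [ht]
      exact hφ_mem t 0 (Or.inl ht)
    · rw [hφ_root t ht]
  · by_contra h
    exact hi ⟨(i, 0), hφ_root i h⟩

/-- For `1 ≤ p < ∞`, every positive central operator on `ℓᵖ` with infinite-dimensional kernel is
a commutator of positive operators. -/
theorem positive_central_infinite_kernel_is_commutator_lp
    (p : ℝ≥0∞) [hp1 : Fact (1 ≤ p)] (hp2 : p ≠ ⊤)
    (C : lp (fun _ : ℕ => ℝ) p →L[ℝ] lp (fun _ : ℕ => ℝ) p)
    (hC_pos : ∀ x : lp (fun _ : ℕ => ℝ) p, (∀ n, 0 ≤ x n) → ∀ n, 0 ≤ C x n)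
    (hC_central : ∃ l : ℝ, 0 ≤ l ∧ ∀ (x : lp (fun _ : ℕ => ℝ) p) (n : ℕ), |C x n| ≤ l * |x n|)
    (hC_ker : ¬ FiniteDimensional ℝ (LinearMap.ker C.toLinearMap)) :
    ∃ A B : lp (fun _ : ℕ => ℝ) p →L[ℝ] lp (fun _ : ℕ => ℝ) p,
      (∀ x : lp (fun _ : ℕ => ℝ) p, (∀ n, 0 ≤ x n) → ∀ n, 0 ≤ A x n) ∧
      (∀ x : lp (fun _ : ℕ => ℝ) p, (∀ n, 0 ≤ x n) → ∀ n, 0 ≤ B x n) ∧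
      C = A ∘L B - B ∘L A :=
  positive_central_infinite_kernel_is_commutator_lp_general p (hp1 := hp1) C hC_pos hC_central
    hC_ker
end

section
/- Let E be a nontrivial real Banach lattice and let A and B be bounded linear operators on E such that A is positive (A x ≥ 0 for all x ≥ 0) or A is negative (A x ≤ 0 for all x ≥ 0). Then there is no real number c > 0 such that AB − BA ≥ cI in the operator order, i.e. it is false that c • x ≤ A(B x) − B(A x) for all x ≥ 0. -/
/-!
Wielandt's argument. If `A ≥ 0` and `[A, B] ≥ c` on the positive cone, the identity
`[A^{n+1}, B] = A [A^n, B] + [A, B] A^n` gives inductively `[A^{n+1}, B] ≥ (n+1)c A^n` on the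
positive cone. Since `|Tx| ≤ T|x|` for a positive operator `T`, its norm is determined on the
positive cone, so `(n+1)c ‖A^n‖ ≤ 2‖B‖ ‖A^{n+1}‖ ≤ 2‖A‖ ‖B‖ ‖A^n‖`. The first inequality shows
inductively that `A^n ≠ 0`, and then the second bounds `(n+1)c` for every `n`, which is absurd.
A negative `A` is handled through `[-A, -B] = [A, B]`.
-/

theorem abs_map_le_map_abs {E F G : Type*} [AddCommGroup E] [Lattice E] [IsOrderedAddMonoid E]
    [AddCommGroup F] [Lattice F] [IsOrderedAddMonoid F] [FunLike G E F] [AddMonoidHomClass G E F]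
    {f : G} (hf : ∀ x, 0 ≤ x → 0 ≤ f x) (x : E) : |f x| ≤ f |x| := by
  refine abs_le'.mpr ⟨?_, ?_⟩
  · have := hf _ (sub_nonneg.mpr (le_abs_self x))
    rwa [map_sub, sub_nonneg] at this
  · have := hf _ (neg_le_iff_add_nonneg.mp (neg_le_abs x))
    rwa [map_add, ← neg_le_iff_add_nonneg] at this

theorem norm_le_norm_of_nonneg_of_le {E : Type*} [NormedAddCommGroup E] [Lattice E]
    [HasSolidNorm E] [IsOrderedAddMonoid E] {a b : E} (ha : 0 ≤ a) (hab : a ≤ b) : ‖a‖ ≤ ‖b‖ :=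
  norm_le_norm_of_abs_le_abs <| by rwa [abs_of_nonneg ha, abs_of_nonneg (ha.trans hab)]

theorem ContinuousLinearMap.opNorm_le_bound_of_map_nonneg {𝕜 E F : Type*}
    [NontriviallyNormedField 𝕜]
    [NormedAddCommGroup E] [Lattice E] [HasSolidNorm E] [IsOrderedAddMonoid E] [NormedSpace 𝕜 E]
    [NormedAddCommGroup F] [Lattice F] [HasSolidNorm F] [IsOrderedAddMonoid F] [NormedSpace 𝕜 F]
    (T : E →L[𝕜] F) (hT : ∀ x, 0 ≤ x → 0 ≤ T x) {M : ℝ} (hM : 0 ≤ M)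
    (h : ∀ x, 0 ≤ x → ‖T x‖ ≤ M * ‖x‖) : ‖T‖ ≤ M :=
  T.opNorm_le_bound hM fun x => calc
    ‖T x‖ ≤ ‖T |x|‖ := norm_le_norm_of_abs_le_abs <|
      (abs_of_nonneg (hT _ (abs_nonneg x))).symm ▸ abs_map_le_map_abs hT x
    _ ≤ M * ‖x‖ := norm_abs_eq_norm x ▸ h _ (abs_nonneg x)

namespace Module.End

variable {R E : Type*} [Ring R] [AddCommGroup E] [PartialOrder E] [Module R E]

theorem pow_apply_nonneg {A : Module.End R E} (hA : ∀ x, 0 ≤ x → 0 ≤ A x) (n : ℕ)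
    {x : E} (hx : 0 ≤ x) : 0 ≤ (A ^ n) x := by
  induction n with
  | zero => exact hx
  | succ n ih => rw [pow_succ', mul_apply]; exact hA _ ih

variable [IsOrderedAddMonoid E]

theorem smul_pow_apply_le_commutator_pow_apply {A B : Module.End R E} {c : R}
    (hA : ∀ x, 0 ≤ x → 0 ≤ A x) (hAB : ∀ x, 0 ≤ x → c • x ≤ (A * B - B * A) x) (n : ℕ)
    {x : E} (hx : 0 ≤ x) :
    ((n + 1 : R) * c) • (A ^ n) x ≤ (A ^ (n + 1) * B - B * A ^ (n + 1)) x := by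
  induction n with
  | zero => simpa using hAB x hx
  | succ n ih =>
    have hmono : A (((n + 1 : R) * c) • (A ^ n) x) ≤
        A ((A ^ (n + 1) * B - B * A ^ (n + 1)) x) := by
      simpa [sub_nonneg] using hA _ (sub_nonneg.mpr ih)
    have hsplit : A ^ (n + 2) * B - B * A ^ (n + 2) =
        A * (A ^ (n + 1) * B - B * A ^ (n + 1)) + (A * B - B * A) * A ^ (n + 1) := by
      rw [pow_succ' A (n + 1)]; noncomm_ring
    calc (((n + 1 : ℕ) + 1 : R) * c) • (A ^ (n + 1)) x
        = A (((n + 1 : R) * c) • (A ^ n) x) + c • (A ^ (n + 1)) x := by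
          rw [map_smul, pow_succ' A n, mul_apply, ← add_smul]; push_cast; rw [add_one_mul _ c]
      _ ≤ A ((A ^ (n + 1) * B - B * A ^ (n + 1)) x) + (A * B - B * A) ((A ^ (n + 1)) x) :=
          add_le_add hmono (hAB _ (pow_apply_nonneg hA _ hx))
      _ = (A ^ (n + 1 + 1) * B - B * A ^ (n + 1 + 1)) x := by rw [hsplit]; rfl

end Module.End

section

open ContinuousLinearMap

variable {E : Type*} [NormedAddCommGroup E] [Lattice E] [HasSolidNorm E] [IsOrderedAddMonoid E]
  [NormedSpace ℝ E] [PosSMulMono ℝ E]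

theorem succ_mul_norm_pow_le {A B : E →L[ℝ] E} {c : ℝ} (hc : 0 ≤ c)
    (hA : ∀ x, 0 ≤ x → 0 ≤ A x) (hAB : ∀ x, 0 ≤ x → c • x ≤ A (B x) - B (A x)) (n : ℕ) :
    (n + 1) * c * ‖A ^ n‖ ≤ 2 * ‖B‖ * ‖A ^ (n + 1)‖ := by
  have hpow : ∀ x, 0 ≤ x → 0 ≤ (((n + 1) * c) • A ^ n) x := fun x hx => by
    have := Module.End.pow_apply_nonneg (A := toLinearMapRingHom A) hA n hx
    rw [← map_pow] at this
    exact smul_nonneg (by positivity) this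
  have hcomm : ∀ x, 0 ≤ x →
      (((n + 1) * c) • A ^ n) x ≤ (A ^ (n + 1) * B - B * A ^ (n + 1)) x := fun x hx => by
    have := Module.End.smul_pow_apply_le_commutator_pow_apply
      (A := toLinearMapRingHom A) (B := toLinearMapRingHom B) hA hAB n hx
    rwa [← map_pow, ← map_pow, ← map_mul, ← map_mul, ← map_sub] at this
  calc (n + 1) * c * ‖A ^ n‖ = ‖((n + 1) * c) • A ^ n‖ := by
        rw [norm_smul, Real.norm_of_nonneg (by positivity)]
    _ ≤ ‖A ^ (n + 1) * B - B * A ^ (n + 1)‖ :=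
        opNorm_le_bound_of_map_nonneg _ hpow (norm_nonneg _) fun x hx =>
          (norm_le_norm_of_nonneg_of_le (hpow x hx) (hcomm x hx)).trans (le_opNorm _ x)
    _ ≤ ‖A ^ (n + 1)‖ * ‖B‖ + ‖B‖ * ‖A ^ (n + 1)‖ :=
        (norm_sub_le _ _).trans (add_le_add (norm_mul_le _ _) (norm_mul_le _ _))
    _ = 2 * ‖B‖ * ‖A ^ (n + 1)‖ := by ring

variable [Nontrivial E]

theorem norm_pow_pos_of_commutator_ge {A B : E →L[ℝ] E} {c : ℝ} (hc : 0 < c)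
    (hA : ∀ x, 0 ≤ x → 0 ≤ A x) (hAB : ∀ x, 0 ≤ x → c • x ≤ A (B x) - B (A x)) (n : ℕ) :
    0 < ‖A ^ n‖ := by
  induction n with
  | zero => simp
  | succ n ih =>
    have hpos : 0 < 2 * ‖B‖ * ‖A ^ (n + 1)‖ :=
      (succ_mul_norm_pow_le hc.le hA hAB n).trans_lt' (by positivity)
    exact pos_of_mul_pos_right hpos (by positivity)

theorem succ_mul_le_of_commutator_ge {A B : E →L[ℝ] E} {c : ℝ} (hc : 0 < c)
    (hA : ∀ x, 0 ≤ x → 0 ≤ A x) (hAB : ∀ x, 0 ≤ x → c • x ≤ A (B x) - B (A x)) (n : ℕ) :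
    (n + 1) * c ≤ 2 * ‖A‖ * ‖B‖ := by
  refine le_of_mul_le_mul_right ?_ (norm_pow_pos_of_commutator_ge hc hA hAB n)
  calc (n + 1) * c * ‖A ^ n‖ ≤ 2 * ‖B‖ * ‖A ^ (n + 1)‖ := succ_mul_norm_pow_le hc.le hA hAB n
    _ ≤ 2 * ‖B‖ * (‖A‖ * ‖A ^ n‖) := by rw [pow_succ']; gcongr; exact norm_mul_le _ _
    _ = 2 * ‖A‖ * ‖B‖ * ‖A ^ n‖ := by ring

theorem not_commutator_ge_of_map_nonneg {A B : E →L[ℝ] E} (hA : ∀ x, 0 ≤ x → 0 ≤ A x) :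
    ¬ ∃ c : ℝ, 0 < c ∧ ∀ x : E, 0 ≤ x → c • x ≤ A (B x) - B (A x) := by
  rintro ⟨c, hc, hAB⟩
  obtain ⟨n, hn⟩ := exists_nat_gt (2 * ‖A‖ * ‖B‖ / c)
  rw [div_lt_iff₀ hc] at hn
  linarith [succ_mul_le_of_commutator_ge hc hA hAB n]

end

theorem commutator_not_ge_positive_multiple_of_identity_general
    {E : Type*} [NormedAddCommGroup E] [Lattice E] [HasSolidNorm E] [IsOrderedAddMonoid E]
    [NormedSpace ℝ E] [PosSMulStrictMono ℝ E]
    [Nontrivial E]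
    (A B : E →L[ℝ] E)
    (hA : (∀ x : E, 0 ≤ x → 0 ≤ A x) ∨ (∀ x : E, 0 ≤ x → A x ≤ 0)) :
    ¬ ∃ c : ℝ, 0 < c ∧ ∀ x : E, 0 ≤ x → c • x ≤ A (B x) - B (A x) := by
  rcases hA with hA | hA
  · exact not_commutator_ge_of_map_nonneg hA
  · have hnegA : ∀ x, 0 ≤ x → 0 ≤ (-A) x := fun x hx => neg_nonneg.mpr (hA x hx)
    simpa using not_commutator_ge_of_map_nonneg (B := -B) hnegA

/-- On a nontrivial Banach lattice, if one of the operators `A`, `B` is positive or negative,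
then the commutator `AB - BA` cannot dominate a positive multiple of the identity. -/
theorem commutator_not_ge_positive_multiple_of_identity
    {E : Type*} [NormedAddCommGroup E] [Lattice E] [HasSolidNorm E] [IsOrderedAddMonoid E]
    [NormedSpace ℝ E] [PosSMulStrictMono ℝ E]
    [CompleteSpace E] [Nontrivial E]
    (A B : E →L[ℝ] E)
    (hA : (∀ x : E, 0 ≤ x → 0 ≤ A x) ∨ (∀ x : E, 0 ≤ x → A x ≤ 0)) :
    ¬ ∃ c : ℝ, 0 < c ∧ ∀ x : E, 0 ≤ x → c • x ≤ A (B x) - B (A x) :=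
  commutator_not_ge_positive_multiple_of_identity_general A B hA
end
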